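/- Let γ ∈ (0,2), d ≥ 1 and G ∈ 𝒮_{γ,⋆}^d. Then there exists a constant C > 0 (depending on G, γ, d) such that for every n ∈ ℕ₊, sup_{s∈[0,T]} (n^γ/n^d) Σ_{{x,y}∈𝒮} |G_s(y/n) − G_s(x/n)| p_γ(y−x) ≤ C. -/

import Mathlib

open MeasureTheory Filter Topology
open scoped ENNReal

noncomputable section

abbrev E (d : ℕ) := EuclideanSpace ℝ (Fin d)

/-- Embedding of `ℤ^d` into `ℝ^d` (with the Euclidean norm). -/
def emb (d : ℕ) (z : Fin d → ℤ) : E d := WithLp.toLp 2 (fun i => (z i : ℝ))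

/-- The last coordinate index. -/
def lastIdx (d : ℕ) (hd : 0 < d) : Fin d := ⟨d - 1, Nat.sub_lt hd Nat.one_pos⟩

/-- The open lower half-space `ℝ^{d-1} × (-∞,0)`. -/
def Hneg (d : ℕ) (hd : 0 < d) : Set (E d) := {u | u (lastIdx d hd) < 0}

/-- The open upper half-space `ℝ^{d-1} × (0,∞)`. -/
def Hpos (d : ℕ) (hd : 0 < d) : Set (E d) := {u | 0 < u (lastIdx d hd)}

/-- Truncated regional fractional Laplacian. -/
def fracTrunc (d : ℕ) (cg γ : ℝ) (O : Set (E d)) (g : E d → ℝ) (ε : ℝ) (u : E d) : ℝ :=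
  cg * ∫ v in {v ∈ O | ε ≤ dist v u}, (g u - g v) / dist v u ^ ((d : ℝ) + γ)

/-- `L` is the value of the regional fractional Laplacian of `g` at `u` (with the
convention that the value is `0` outside `O`). -/
def HasRegFracLap (d : ℕ) (cg γ : ℝ) (O : Set (E d)) (g : E d → ℝ) (u : E d) (L : ℝ) : Prop :=
  (u ∈ O ∧ Tendsto (fun ε => fracTrunc d cg γ O g ε u) (𝓝[>] 0) (𝓝 L)) ∨ (u ∉ O ∧ L = 0)

open Classical in
/-- The regional fractional Laplacian (as a limit, with junk value when it does not exist,
and `0` outside of `O`). -/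
def regFracLap (d : ℕ) (cg γ : ℝ) (O : Set (E d)) (g : E d → ℝ) (u : E d) : ℝ :=
  if u ∈ O then limUnder (𝓝[>] (0:ℝ)) (fun ε => fracTrunc d cg γ O g ε u) else 0

/-- Partial derivative in direction `e_j`. -/
def pd (d : ℕ) (f : E d → ℝ) (j : Fin d) (u : E d) : ℝ :=
  fderiv ℝ f u (EuclideanSpace.single j 1)

/-- `[G_s]_k(u)`: absolute value of `G_s(u)` plus the sum of the absolute values of all
spatial partial derivatives of order at most `k ≤ 2`. -/
def bracket (d : ℕ) (G : ℝ → E d → ℝ) (k : ℕ) (s : ℝ) (u : E d) : ℝ :=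
  |G s u| + (if 1 ≤ k then ∑ j : Fin d, |pd d (G s) j u| else 0)
    + (if 2 ≤ k then ∑ i : Fin d, ∑ j : Fin d, |pd d (fun w => pd d (G s) j w) i u| else 0)

/-- The seminorm `⦀G⦀_{r,k}`. -/
def bnorm (T : ℝ) (d : ℕ) (G : ℝ → E d → ℝ) (r k : ℕ) : ℝ :=
  ⨆ p : Set.Icc (0:ℝ) T × E d, ‖p.2‖ ^ r * bracket d G k (p.1 : ℝ) p.2

/-- The class `𝒮²(ℝ^d)`. -/
structure MemS2 (T : ℝ) (d : ℕ) (G : ℝ → E d → ℝ) : Prop where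
  cont : ContinuousOn (fun p : ℝ × E d => G p.1 p.2) (Set.Icc (0:ℝ) T ×ˢ Set.univ)
  smooth : ∀ s ∈ Set.Icc (0:ℝ) T, ContDiff ℝ 2 (G s)
  cont1 : ∀ j : Fin d,
    ContinuousOn (fun p : ℝ × E d => pd d (G p.1) j p.2) (Set.Icc (0:ℝ) T ×ˢ Set.univ)
  cont2 : ∀ i j : Fin d,
    ContinuousOn (fun p : ℝ × E d => pd d (fun w => pd d (G p.1) j w) i p.2)
      (Set.Icc (0:ℝ) T ×ˢ Set.univ)
  bdd : ∀ r : ℕ, BddAbove (Set.range fun p : Set.Icc (0:ℝ) T × E d =>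
      ‖p.2‖ ^ r * bracket d G 2 (p.1 : ℝ) p.2)

/-- The class `𝒮_c²(ℝ^d)`. -/
structure MemS2c (T : ℝ) (d : ℕ) (G : ℝ → E d → ℝ) : Prop where
  mem : MemS2 T d G
  csupp : ∃ K : Set (E d), IsCompact K ∧ ∀ s ∈ Set.Icc (0:ℝ) T, ∀ u ∉ K, G s u = 0

/-- The constant `b_G`. -/
def bG (T : ℝ) (d : ℕ) (G : ℝ → E d → ℝ) : ℝ :=
  sInf {b : ℝ | 1 < b ∧ ∀ u : E d, b ≤ ‖u‖ → ∀ s ∈ Set.Icc (0:ℝ) T, G s u = 0}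

open Classical in
/-- The class `𝒮_γ^d`. -/
def MemSgamCal (T : ℝ) (d : ℕ) (γ : ℝ) (G : ℝ → E d → ℝ) : Prop :=
  if 1 < γ ∧ d = 1 then MemS2 T d G else MemS2c T d G

open Classical in
/-- Functions glued, at the hyperplane `u_d = 0`, from two functions of class `P`. -/
def GluedFrom (d : ℕ) (hd : 0 < d) (P : (ℝ → E d → ℝ) → Prop) (G : ℝ → E d → ℝ) : Prop :=
  ∃ Gm Gp : ℝ → E d → ℝ, P Gm ∧ P Gp ∧
    ∀ s u, G s u = if u (lastIdx d hd) < 0 then Gm s u else Gp s u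

/-- Time derivative `∂_s G`. -/
def tderiv (d : ℕ) (G : ℝ → E d → ℝ) (s : ℝ) (u : E d) : ℝ := deriv (fun t => G t u) s

/-- The class `C^{1,2}([0,T] × ℝ^d)`. -/
structure MemC12 (T : ℝ) (d : ℕ) (G : ℝ → E d → ℝ) : Prop where
  cont : ContinuousOn (fun p : ℝ × E d => G p.1 p.2) (Set.Icc (0:ℝ) T ×ˢ Set.univ)
  smooth : ∀ s ∈ Set.Icc (0:ℝ) T, ContDiff ℝ 2 (G s)
  tdiff : ∀ u : E d, ∀ s ∈ Set.Icc (0:ℝ) T, DifferentiableAt ℝ (fun t => G t u) s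
  tcont : ContinuousOn (fun p : ℝ × E d => tderiv d G p.1 p.2) (Set.Icc (0:ℝ) T ×ˢ Set.univ)
  cont1 : ∀ j : Fin d,
    ContinuousOn (fun p : ℝ × E d => pd d (G p.1) j p.2) (Set.Icc (0:ℝ) T ×ˢ Set.univ)
  cont2 : ∀ i j : Fin d,
    ContinuousOn (fun p : ℝ × E d => pd d (fun w => pd d (G p.1) j w) i p.2)
      (Set.Icc (0:ℝ) T ×ˢ Set.univ)

/-- The class `C_c^{1,2}([0,T] × ℝ^d)`. -/
structure MemCc12 (T : ℝ) (d : ℕ) (G : ℝ → E d → ℝ) : Prop where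
  mem : MemC12 T d G
  csupp : ∃ K : Set (E d), IsCompact K ∧ ∀ s ∈ Set.Icc (0:ℝ) T, ∀ u ∉ K, G s u = 0

/-- The class `S^{1,2}([0,T] × ℝ^d)`. -/
structure MemS12 (T : ℝ) (d : ℕ) (G : ℝ → E d → ℝ) : Prop where
  mem : MemC12 T d G
  tsmooth : ∀ s ∈ Set.Icc (0:ℝ) T, ContDiff ℝ 2 (fun u => tderiv d G s u)
  bdd : ∀ k : ℕ, BddAbove (Set.range fun p : Set.Icc (0:ℝ) T × E d =>
      ‖p.2‖ ^ k * (bracket d G 2 (p.1 : ℝ) p.2 + bracket d (tderiv d G) 2 (p.1 : ℝ) p.2))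

open Classical in
/-- The class `S_γ^d`. -/
def MemSgam (T : ℝ) (d : ℕ) (γ : ℝ) (G : ℝ → E d → ℝ) : Prop :=
  if 1 < γ ∧ d = 1 then MemS12 T d G else MemCc12 T d G

/-- The class `S_{γ,0}^d`. -/
def MemSgam0 (T : ℝ) (d : ℕ) (hd : 0 < d) (γ : ℝ) (G : ℝ → E d → ℝ) : Prop :=
  GluedFrom d hd (MemSgam T d γ) G

open Classical in
/-- The class `S_{γ,κ}^d`. -/
def MemSgamK (T : ℝ) (d : ℕ) (hd : 0 < d) (γ κ : ℝ) (G : ℝ → E d → ℝ) : Prop :=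
  if κ = 0 then MemSgam0 T d hd γ G else MemSgam T d γ G

/-- The kernel `K_H^γ(u,v)`. -/
def Kg (d : ℕ) (cg γ : ℝ) (H : E d → ℝ) (u v : E d) : ℝ :=
  cg * (H u - H v) / ‖u - v‖ ^ ((d : ℝ) + γ)

open Classical in
/-- Discrete regional fractional Laplacian `Δ_{n,C}^{γ/2}` associated to a set of bonds. -/
def discOp (d : ℕ) (cg γ : ℝ) (n : ℕ) (rel : (Fin d → ℤ) → (Fin d → ℤ) → Prop)
    (H : E d → ℝ) (x : Fin d → ℤ) : ℝ :=
  (n : ℝ)⁻¹ ^ d * ∑' y : Fin d → ℤ,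
    if rel x y then Kg d cg γ H ((n : ℝ)⁻¹ • emb d x) ((n : ℝ)⁻¹ • emb d y) else 0

/-- `{x,y}` is a slow bond. -/
def slowRel (d : ℕ) (hd : 0 < d) (x y : Fin d → ℤ) : Prop :=
  (x (lastIdx d hd) < 0 ∧ 0 ≤ y (lastIdx d hd)) ∨ (y (lastIdx d hd) < 0 ∧ 0 ≤ x (lastIdx d hd))

/-- `{x,y}` is a fast bond. -/
def fastRel (d : ℕ) (hd : 0 < d) (x y : Fin d → ℤ) : Prop :=
  x ≠ y ∧ ¬ slowRel d hd x y

/-- The distorted fractional Laplacian `𝕃_κ^γ`. -/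
def Lkappa (d : ℕ) (hd : 0 < d) (cg γ κ : ℝ) (g : E d → ℝ) (u : E d) : ℝ :=
  κ * regFracLap d cg γ Set.univ g u
    + (1 - κ) * (regFracLap d cg γ (Hneg d hd) g u + regFracLap d cg γ (Hpos d hd) g u)

/-- The sequence `r_n^γ`. -/
def rn (γ : ℝ) (n : ℕ) : ℝ :=
  if γ < 1 then 1 else if γ = 1 then Real.log n else (n : ℝ) ^ (γ - 1)

open Classical in
/-- The long-range transition probability `p_γ`. -/
def pgam (d : ℕ) (cg γ : ℝ) (z : Fin d → ℤ) : ℝ :=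
  if z = 0 then 0 else cg * ‖emb d z‖ ^ (-((d : ℝ) + γ))

/-- The symmetric second difference `Δ_w G_s(u)`. -/
def ddiff (d : ℕ) (G : ℝ → E d → ℝ) (s : ℝ) (w u : E d) : ℝ :=
  G s (u + w) - 2 * G s u + G s (u - w)

/-- The discrete gradient `∇_j^{(n)} G_s(u)`. -/
def ndiff (d : ℕ) (G : ℝ → E d → ℝ) (s : ℝ) (j : Fin d) (n : ℕ) (u : E d) : ℝ :=
  G s (u + (n : ℝ)⁻¹ • EuclideanSpace.single j 1) - G s u

/-- The class `𝒮⁰(ℝ^d)`. -/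
structure MemS0 (T : ℝ) (d : ℕ) (G : ℝ → E d → ℝ) : Prop where
  cont : ContinuousOn (fun p : ℝ × E d => G p.1 p.2) (Set.Icc (0:ℝ) T ×ˢ Set.univ)
  bdd : ∀ r : ℕ, ∃ C : ℝ, ∀ s ∈ Set.Icc (0:ℝ) T, ∀ u : E d, ‖u‖ ^ r * |G s u| ≤ C

/-- The class `𝒮_c⁰(ℝ^d)`. -/
structure MemS0c (T : ℝ) (d : ℕ) (G : ℝ → E d → ℝ) : Prop where
  mem : MemS0 T d G
  csupp : ∃ K : Set (E d), IsCompact K ∧ ∀ s ∈ Set.Icc (0:ℝ) T, ∀ u ∉ K, G s u = 0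

end

noncomputable section
open scoped Classical

/-- The class `𝒮_{γ,⋆}^d`. -/
def MemSgamCalStar (T : ℝ) (d : ℕ) (hd : 0 < d) (γ : ℝ) (G : ℝ → E d → ℝ) : Prop :=
  ∃ Gm Gp : ℝ → E d → ℝ, MemSgamCal T d γ Gm ∧ MemSgamCal T d γ Gp ∧
    (∀ s u, G s u = if u (lastIdx d hd) < 0 then Gm s u else Gp s u) ∧
    ∀ s ∈ Set.Icc (0:ℝ) T, ∀ u : E d, u (lastIdx d hd) = 0 → Gm s u = Gp s u

namespace Stmt15


lemma tsum_ofReal_le {ι : Type*} {g : ι → ℝ} (hg : ∀ i, 0 ≤ g i) {B : ℝ}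
    (hB : 0 ≤ B) (h : ∑' i, ENNReal.ofReal (g i) ≤ ENNReal.ofReal B) : ∑' i, g i ≤ B := by
  have hfin : ∑' i, ENNReal.ofReal (g i) ≠ ∞ := (h.trans_lt ENNReal.ofReal_lt_top).ne
  have hs : Summable g := by
    have h2 := ENNReal.summable_toReal hfin
    have : (fun i => (ENNReal.ofReal (g i)).toReal) = g :=
      funext fun i => ENNReal.toReal_ofReal (hg i)
    rwa [this] at h2
  rw [← ENNReal.ofReal_tsum_of_nonneg hg hs] at h
  exact (ENNReal.ofReal_le_ofReal_iff hB).mp h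

lemma emb_coord_le {d : ℕ} (z : Fin d → ℤ) (i : Fin d) : |(z i : ℝ)| ≤ ‖emb d z‖ := by
  rw [EuclideanSpace.norm_eq]
  have h1 : |(z i : ℝ)| = Real.sqrt (‖emb d z i‖ ^ 2) := by
    rw [Real.sqrt_sq_eq_abs]
    simp [emb]
  rw [h1]
  apply Real.sqrt_le_sqrt
  exact Finset.single_le_sum (f := fun j => ‖emb d z j‖ ^ 2)
    (fun j _ => sq_nonneg _) (Finset.mem_univ i)

lemma emb_sub (d : ℕ) (x y : Fin d → ℤ) : emb d (y - x) = emb d y - emb d x := by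
  ext i; simp [emb]

lemma tsum_box_le {ι : Type*} [Fintype ι] [DecidableEq ι] (a b : ι → ℤ) (c : ℝ≥0∞) (P : (ι → ℤ) → Prop) [DecidablePred P]
    (hP : ∀ z, P z → z ∈ Finset.Icc a b) :
    ∑' z : ι → ℤ, (if P z then c else 0) ≤ (∏ i, (b i + 1 - a i).toNat : ℕ) * c := by
  classical
  have h0 : ∀ z ∉ Finset.Icc a b, (if P z then c else 0) = 0 := by
    intro z hz
    rw [if_neg (fun hPz => hz (hP z hPz))]
  rw [tsum_eq_sum h0]
  calc ∑ z ∈ Finset.Icc a b, (if P z then c else 0) ≤ ∑ _z ∈ Finset.Icc a b, c :=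
        Finset.sum_le_sum (fun _ _ => by split <;> simp)
    _ = (Finset.Icc a b).card * c := by rw [Finset.sum_const, nsmul_eq_mul]
    _ = _ := by rw [Pi.card_Icc]; simp [Int.card_Icc]


open scoped Classical in
lemma tsum_ofReal_geometric (c r : ℝ) (hc : 0 ≤ c) (hr0 : 0 ≤ r) (hr1 : r < 1) :
    ∑' i : ℕ, ENNReal.ofReal (c * r ^ i) ≤ ENNReal.ofReal (c * (1 - r)⁻¹) := by
  have hs : Summable (fun i : ℕ => c * r ^ i) :=
    (summable_geometric_of_lt_one hr0 hr1).mul_left c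
  rw [← ENNReal.ofReal_tsum_of_nonneg (fun i => mul_nonneg hc (pow_nonneg hr0 i)) hs]
  apply ENNReal.ofReal_le_ofReal
  rw [tsum_mul_left, tsum_geometric_of_lt_one hr0 hr1]

lemma rlog_facts {A t : ℝ} (hA : 0 < A) (hq : 1 ≤ t / A) :
    2 ^ ((Int.log 2 (t / A)).toNat) * A ≤ t ∧ t < 2 ^ ((Int.log 2 (t / A)).toNat + 1) * A := by
  have hq0 : 0 < t / A := lt_of_lt_of_le one_pos hq
  have hlog0 : 0 ≤ Int.log 2 (t / A) := by
    have := Int.log_mono_right (b := 2) one_pos hq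
    simpa using this
  have hzpow : ((2:ℝ) ^ (Int.log 2 (t / A))) = (2:ℝ) ^ ((Int.log 2 (t / A)).toNat) := by
    rw [← zpow_natCast (2:ℝ), Int.toNat_of_nonneg hlog0]
  constructor
  · have h := Int.zpow_log_le_self (R := ℝ) (b := 2) one_lt_two hq0
    push_cast at h
    rw [hzpow] at h
    calc 2 ^ ((Int.log 2 (t / A)).toNat) * A ≤ (t / A) * A :=
          mul_le_mul_of_nonneg_right h hA.le
      _ = t := by field_simp
  · have h := Int.lt_zpow_succ_log_self (R := ℝ) (b := 2) one_lt_two (t / A)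
    push_cast at h
    rw [zpow_add₀ (by norm_num : (2:ℝ) ≠ 0), hzpow, zpow_one] at h
    have h' : t / A < 2 ^ ((Int.log 2 (t / A)).toNat + 1) := by
      rw [pow_succ]; exact h
    calc t = (t / A) * A := by field_simp
      _ < 2 ^ ((Int.log 2 (t / A)).toNat + 1) * A := mul_lt_mul_of_pos_right h' hA

open scoped Classical in
lemma latticeI (d : ℕ) (hd : 0 < d) {β : ℝ} (hβ : (d : ℝ) < β) :
    ∃ C : ℝ, 0 < C ∧ ∀ a : ℤ, 1 ≤ a →
      ∑' z : Fin d → ℤ, (if a ≤ z (lastIdx d hd) then ENNReal.ofReal (‖emb d z‖ ^ (-β)) else 0)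
        ≤ ENNReal.ofReal (C * (a:ℝ) ^ ((d:ℝ) - β)) := by
  set r : ℝ := 2 ^ ((d:ℝ) - β) with hr
  have hr0 : 0 ≤ r := Real.rpow_nonneg (by norm_num) _
  have hr1 : r < 1 := Real.rpow_lt_one_of_one_lt_of_neg one_lt_two (by linarith)
  refine ⟨(5:ℝ)^d * (1 - r)⁻¹,
    mul_pos (by positivity) (inv_pos.2 (by linarith)), fun a ha => ?_⟩
  have hA : (1:ℝ) ≤ (a:ℝ) := by exact_mod_cast ha
  have hApos : (0:ℝ) < (a:ℝ) := by linarith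
  set T : ℕ → (Fin d → ℤ) → ℝ≥0∞ := fun i z =>
    if (∀ j, |z j| ≤ 2^(i+1) * a) then ENNReal.ofReal ((2^i * (a:ℝ)) ^ (-β)) else 0 with hT
  have hpt : ∀ z : Fin d → ℤ,
      (if a ≤ z (lastIdx d hd) then ENNReal.ofReal (‖emb d z‖ ^ (-β)) else 0) ≤ ∑' i, T i z := by
    intro z
    split_ifs with hz
    · set t := ‖emb d z‖ with htdef
      have hta : (a:ℝ) ≤ t := by
        refine le_trans ?_ (emb_coord_le z (lastIdx d hd))
        refine le_trans ?_ (le_abs_self _)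
        exact_mod_cast hz
      have htpos : 0 < t := lt_of_lt_of_le hApos hta
      have hquot : 1 ≤ t / (a:ℝ) := (one_le_div hApos).2 hta
      obtain ⟨h1, h2⟩ := rlog_facts hApos hquot
      set i₀ := (Int.log 2 (t / (a:ℝ))).toNat with hi₀
      have hbox : ∀ j, |z j| ≤ 2^(i₀+1) * a := by
        intro j
        have hj : |(z j : ℝ)| < ((2^(i₀+1) * a : ℤ) : ℝ) := by
          push_cast
          exact lt_of_le_of_lt (emb_coord_le z j) h2
        rw [← Int.cast_abs] at hj
        exact_mod_cast le_of_lt hj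
      have hval : ENNReal.ofReal (t ^ (-β)) ≤ T i₀ z := by
        rw [hT]
        simp only [if_pos hbox]
        apply ENNReal.ofReal_le_ofReal
        exact Real.rpow_le_rpow_of_nonpos (by positivity) h1 (by linarith)
      exact le_trans hval (ENNReal.le_tsum i₀)
    · exact zero_le
  calc ∑' z : Fin d → ℤ, (if a ≤ z (lastIdx d hd) then ENNReal.ofReal (‖emb d z‖ ^ (-β)) else 0)
      ≤ ∑' z, ∑' i, T i z := ENNReal.tsum_le_tsum hpt
    _ = ∑' i, ∑' z, T i z := ENNReal.tsum_comm
    _ ≤ ∑' i : ℕ, ENNReal.ofReal (((5:ℝ)^d * (a:ℝ) ^ ((d:ℝ) - β)) * r ^ i) := by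
        apply ENNReal.tsum_le_tsum
        intro i
        have hcount := tsum_box_le (fun _ : Fin d => -(2^(i+1) * a)) (fun _ => 2^(i+1) * a)
          (ENNReal.ofReal ((2^i * (a:ℝ)) ^ (-β))) (fun z => ∀ j, |z j| ≤ 2^(i+1) * a)
          (by
            intro z hzz
            rw [Finset.mem_Icc]
            constructor <;> (intro j; have := abs_le.1 (hzz j)) <;>
              [exact this.1; exact this.2])
        refine le_trans hcount ?_
        set M : ℕ := ((2^(i+1) * a) + 1 - -(2^(i+1) * a)).toNat with hM
    -- bound on M as a real number
        have hnonneg : (0:ℤ) ≤ (2^(i+1) * a) + 1 - -(2^(i+1) * a) := by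
          have hp : (0:ℤ) < 2^(i+1) := pow_pos (by norm_num) _
          nlinarith
        have hle : (M : ℝ) ≤ 5 * 2^i * (a:ℝ) := by
          have h' : ((M : ℤ) : ℝ) ≤ 5 * 2^i * (a:ℝ) := by
            rw [hM, Int.toNat_of_nonneg hnonneg]
            push_cast
            have h2i : (1:ℝ) ≤ 2^i := one_le_pow₀ (by norm_num)
            have hps : (2:ℝ)^(i+1) = 2 * 2^i := by ring
            have h1a : (2:ℝ)^i * 1 ≤ 2^i * (a:ℝ) :=
              mul_le_mul_of_nonneg_left hA (le_trans zero_le_one h2i)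
            nlinarith
          exact_mod_cast h'
        have hcard : ((∏ _j : Fin d, M : ℕ) : ℝ≥0∞) ≤ ENNReal.ofReal ((5 * 2^i * (a:ℝ)) ^ d) := by
          rw [Finset.prod_const, Finset.card_univ, Fintype.card_fin]
          rw [← ENNReal.ofReal_natCast]
          apply ENNReal.ofReal_le_ofReal
          push_cast
          exact pow_le_pow_left₀ (by positivity) hle d
        calc ((∏ _j : Fin d, M : ℕ) : ℝ≥0∞) * ENNReal.ofReal ((2^i * (a:ℝ)) ^ (-β))
            ≤ ENNReal.ofReal ((5 * 2^i * (a:ℝ)) ^ d) * ENNReal.ofReal ((2^i * (a:ℝ)) ^ (-β)) :=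
              mul_le_mul_left hcard _
          _ = ENNReal.ofReal ((5 * 2^i * (a:ℝ)) ^ d * (2^i * (a:ℝ)) ^ (-β)) := by
              rw [← ENNReal.ofReal_mul (by positivity)]
          _ ≤ ENNReal.ofReal (((5:ℝ)^d * (a:ℝ) ^ ((d:ℝ) - β)) * r ^ i) := by
              apply ENNReal.ofReal_le_ofReal
              apply le_of_eq
              have hw : (0:ℝ) < 2^i * (a:ℝ) := by positivity
              have e1 : (5 * 2^i * (a:ℝ)) ^ d = 5^d * (2^i * (a:ℝ))^d := by
                rw [show (5 * 2^i * (a:ℝ)) = 5 * (2^i * (a:ℝ)) by ring, mul_pow]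
              rw [e1, mul_assoc, ← Real.rpow_natCast (2^i * (a:ℝ)) d, ← Real.rpow_add hw]
              have e2 : ((2:ℝ)^i * (a:ℝ)) ^ ((d:ℝ) + -β) = r ^ i * (a:ℝ) ^ ((d:ℝ) - β) := by
                rw [show (d:ℝ) + -β = (d:ℝ) - β by ring]
                rw [Real.mul_rpow (by positivity) hApos.le]
                congr 1
                rw [← Real.rpow_natCast (2:ℝ) i,
                  ← Real.rpow_mul (by norm_num : (0:ℝ) ≤ 2), hr,
                  ← Real.rpow_natCast ((2:ℝ) ^ ((d:ℝ) - β)) i,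
                  ← Real.rpow_mul (by norm_num : (0:ℝ) ≤ 2), mul_comm]
              rw [e2]; ring
    _ ≤ ENNReal.ofReal ((((5:ℝ)^d * (a:ℝ) ^ ((d:ℝ) - β))) * (1 - r)⁻¹) :=
        tsum_ofReal_geometric _ r (by positivity) hr0 hr1
    _ = _ := by congr 1; ring

set_option maxHeartbeats 2000000 in
open scoped Classical in
lemma latticeM (d : ℕ) (hd : 0 < d) {δ : ℝ} (hδ0 : 0 < δ) (hδ1 : δ < 1) :
    ∃ C : ℝ, 0 < C ∧ ∀ n : ℕ, 1 ≤ n →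
      ∑' x : Fin d → ℤ, ENNReal.ofReal
          ((1 + ‖(n:ℝ)⁻¹ • emb d x‖ ^ (d+2))⁻¹ * (1 + |(x (lastIdx d hd) : ℝ)|) ^ (-δ))
        ≤ ENNReal.ofReal (C * (n:ℝ) ^ ((d:ℝ) - δ)) := by
  set ℓ := lastIdx d hd with hℓ
  set q : ℝ := ((2:ℝ)^(d+2))⁻¹ with hq
  have hq0 : 0 < q := by positivity
  set ρ : ℝ := (2:ℝ) ^ ((1:ℝ) - δ) with hρ
  have hρ1 : 1 < ρ := by
    have := Real.rpow_lt_rpow_of_exponent_lt (x := 2) (by norm_num) (show (0:ℝ) < (1:ℝ) - δ by linarith)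
    simpa using this
  have hρ2 : ρ < 2 := by
    have h2 : ρ < 2 ^ (1:ℝ) := Real.rpow_lt_rpow_of_exponent_lt (by norm_num) (by linarith)
    simpa using h2
  have hσ0 : (0:ℝ) ≤ ρ/8 := by positivity
  have hσ1 : ρ/8 < 1 := by linarith
  refine ⟨8 * (ρ-1)⁻¹ * 8 * 5^(d-1) * (1 - ρ/8)⁻¹, ?_, ?_⟩
  · have h1 : (0:ℝ) < (ρ-1)⁻¹ := inv_pos.2 (by linarith)
    have h2 : (0:ℝ) < (1-ρ/8)⁻¹ := inv_pos.2 (by linarith)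
    positivity
  intro n hn
  have hn1 : (1:ℝ) ≤ (n:ℝ) := by exact_mod_cast hn
  have hn0 : (0:ℝ) < (n:ℝ) := by linarith
  set B : ℕ → ℕ → Fin d → ℤ := fun i k j => if j = ℓ then 2^(k+1) else 2^(i+1)*(n:ℤ) with hB
  set T : ℕ → ℕ → (Fin d → ℤ) → ℝ≥0∞ := fun i k x =>
    if (2^k ≤ 2^(i+2)*n ∧ ∀ j, |x j| ≤ B i k j) then
      ENNReal.ofReal (q^i * ((2:ℝ)^k) ^ (-δ)) else 0 with hT
  -- pointwise bound
  have hpt : ∀ x : Fin d → ℤ,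
      ENNReal.ofReal ((1 + ‖(n:ℝ)⁻¹ • emb d x‖ ^ (d+2))⁻¹ * (1 + |(x ℓ : ℝ)|) ^ (-δ))
        ≤ ∑' i : ℕ, ∑' k : ℕ, T i k x := by
    intro x
    set t := ‖emb d x‖ with ht
    have ht0 : 0 ≤ t := norm_nonneg _
    have hsm : ‖(n:ℝ)⁻¹ • emb d x‖ = t / (n:ℝ) := by
      rw [norm_smul, Real.norm_eq_abs, abs_inv, abs_of_pos hn0, div_eq_inv_mul]
    obtain ⟨i₀, hi₁, hi₂⟩ : ∃ i₀ : ℕ, t < 2^(i₀+1) * (n:ℝ) ∧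
        (1 + ‖(n:ℝ)⁻¹ • emb d x‖ ^ (d+2))⁻¹ ≤ q^i₀ := by
      rcases lt_or_ge (t / (n:ℝ)) 1 with hc | hc
      · refine ⟨0, ?_, ?_⟩
        · have h1 := (div_lt_one hn0).1 hc
          have h2 : (2:ℝ)^(0+1) = 2 := by norm_num
          nlinarith
        · have h1 : (1:ℝ) ≤ 1 + ‖(n:ℝ)⁻¹ • emb d x‖ ^ (d+2) := by
            have : (0:ℝ) ≤ ‖(n:ℝ)⁻¹ • emb d x‖ ^ (d+2) := by positivity
            linarith
          simpa using inv_anti₀ one_pos h1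
      · obtain ⟨hl, hr⟩ := rlog_facts hn0 hc
        set i₀ := (Int.log 2 (t / (n:ℝ))).toNat with hi₀
        refine ⟨i₀, hr, ?_⟩
        have h2i : (2:ℝ)^i₀ ≤ t / (n:ℝ) := by
          rw [le_div_iff₀ hn0]; exact hl
        have h3 : ((2:ℝ)^(d+2))^i₀ ≤ 1 + ‖(n:ℝ)⁻¹ • emb d x‖ ^ (d+2) := by
          rw [hsm]
          have h4 : ((2:ℝ)^i₀)^(d+2) ≤ (t / (n:ℝ))^(d+2) :=
            pow_le_pow_left₀ (by positivity) h2i _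
          rw [← pow_mul, mul_comm i₀ (d+2), pow_mul] at h4
          linarith
        have h5 : (1 + ‖(n:ℝ)⁻¹ • emb d x‖ ^ (d+2))⁻¹ ≤ (((2:ℝ)^(d+2))^i₀)⁻¹ :=
          inv_anti₀ (by positivity) h3
        rwa [← inv_pow] at h5
    set Y : ℝ := 1 + |(x ℓ : ℝ)| with hY
    have hY1 : 1 ≤ Y := by rw [hY]; have := abs_nonneg ((x ℓ : ℝ)); linarith
    have hYq : 1 ≤ Y / 1 := by rwa [div_one]
    obtain ⟨hk1, hk2⟩ := rlog_facts one_pos hYq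
    set k₀ := (Int.log 2 (Y / 1)).toNat with hk₀
    rw [mul_one] at hk1 hk2
    -- box membership
    have hboxi : ∀ j, |x j| ≤ 2^(i₀+1)*(n:ℤ) := by
      intro j
      have hj : |(x j : ℝ)| < ((2^(i₀+1)*(n:ℤ) : ℤ) : ℝ) := by
        push_cast
        exact lt_of_le_of_lt (emb_coord_le x j) hi₁
      rw [← Int.cast_abs] at hj
      exact_mod_cast le_of_lt hj
    have hboxk : |x ℓ| ≤ (2^(k₀+1) : ℤ) := by
      have hj : |(x ℓ : ℝ)| < ((2^(k₀+1) : ℤ) : ℝ) := by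
        push_cast
        calc |(x ℓ : ℝ)| < Y := by rw [hY]; linarith
          _ < 2^(k₀+1) := hk2
      rw [← Int.cast_abs] at hj
      exact_mod_cast le_of_lt hj
    have hcut : 2^k₀ ≤ 2^(i₀+2)*n := by
      have hreal : (2:ℝ)^k₀ < ((2^(i₀+2)*n : ℕ) : ℝ) := by
        push_cast
        have hxt : |(x ℓ : ℝ)| ≤ t := emb_coord_le x ℓ
        have h2p : (1:ℝ) ≤ 2^(i₀+1) * (n:ℝ) := by
          have : (1:ℝ) ≤ 2^(i₀+1) := one_le_pow₀ (by norm_num)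
          nlinarith
        have hpp : (2:ℝ)^(i₀+2) = 2 * 2^(i₀+1) := by ring
        calc (2:ℝ)^k₀ ≤ Y := hk1
          _ ≤ 1 + t := by rw [hY]; linarith
          _ < 1 + 2^(i₀+1) * (n:ℝ) := by linarith
          _ ≤ 2^(i₀+2) * (n:ℝ) := by rw [hpp]; nlinarith
      exact_mod_cast le_of_lt hreal
    have hcond : 2^k₀ ≤ 2^(i₀+2)*n ∧ ∀ j, |x j| ≤ B i₀ k₀ j := by
      refine ⟨hcut, fun j => ?_⟩
      simp only [hB]
      by_cases hje : j = ℓ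
      · rw [if_pos hje, hje]; exact hboxk
      · rw [if_neg hje]; exact hboxi j
    have hval : ENNReal.ofReal ((1 + ‖(n:ℝ)⁻¹ • emb d x‖ ^ (d+2))⁻¹ * Y ^ (-δ))
        ≤ T i₀ k₀ x := by
      simp only [hT]
      simp only [if_pos hcond]
      apply ENNReal.ofReal_le_ofReal
      have hv1 : Y ^ (-δ) ≤ ((2:ℝ)^k₀) ^ (-δ) :=
        Real.rpow_le_rpow_of_nonpos (by positivity) hk1 (by linarith)
      have hv2 : (0:ℝ) ≤ Y ^ (-δ) := Real.rpow_nonneg (by linarith) _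
      have hv3 : (0:ℝ) ≤ (1 + ‖(n:ℝ)⁻¹ • emb d x‖ ^ (d+2))⁻¹ := by positivity
      calc (1 + ‖(n:ℝ)⁻¹ • emb d x‖ ^ (d+2))⁻¹ * Y ^ (-δ) ≤ q^i₀ * Y ^ (-δ) :=
            mul_le_mul_of_nonneg_right hi₂ hv2
        _ ≤ q^i₀ * ((2:ℝ)^k₀) ^ (-δ) :=
            mul_le_mul_of_nonneg_left hv1 (by positivity)
    calc ENNReal.ofReal ((1 + ‖(n:ℝ)⁻¹ • emb d x‖ ^ (d+2))⁻¹ * Y ^ (-δ)) ≤ T i₀ k₀ x := hval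
      _ ≤ ∑' k : ℕ, T i₀ k x := ENNReal.le_tsum k₀
      _ ≤ ∑' i : ℕ, ∑' k : ℕ, T i k x := ENNReal.le_tsum i₀
  -- summation
  calc ∑' x : Fin d → ℤ, ENNReal.ofReal
        ((1 + ‖(n:ℝ)⁻¹ • emb d x‖ ^ (d+2))⁻¹ * (1 + |(x ℓ : ℝ)|) ^ (-δ))
      ≤ ∑' x : Fin d → ℤ, ∑' i : ℕ, ∑' k : ℕ, T i k x := ENNReal.tsum_le_tsum hpt
    _ = ∑' i : ℕ, ∑' x : Fin d → ℤ, ∑' k : ℕ, T i k x := ENNReal.tsum_comm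
    _ = ∑' i : ℕ, ∑' k : ℕ, ∑' x : Fin d → ℤ, T i k x := by
        refine tsum_congr (fun i => ?_)
        exact ENNReal.tsum_comm
    _ ≤ ∑' i : ℕ, ENNReal.ofReal
          ((8 * (ρ-1)⁻¹ * 8 * 5^(d-1) * (n:ℝ) ^ ((d:ℝ) - δ)) * (ρ/8)^i) := by
        apply ENNReal.tsum_le_tsum
        intro i
        -- inner: sum over k and x
        have hstep1 : ∀ k : ℕ, ∑' x : Fin d → ℤ, T i k x ≤
            (if 2^k ≤ 2^(i+2)*n then
              ENNReal.ofReal ((2^(k+3) * (5 * 2^i * (n:ℝ))^(d-1)) * (q^i * ((2:ℝ)^k) ^ (-δ)))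
             else 0) := by
          intro k
          by_cases hck : 2^k ≤ 2^(i+2)*n
          · rw [if_pos hck]
            have hb := tsum_box_le (fun j => -(B i k j)) (B i k)
              (ENNReal.ofReal (q^i * ((2:ℝ)^k) ^ (-δ)))
              (fun x => 2^k ≤ 2^(i+2)*n ∧ ∀ j, |x j| ≤ B i k j)
              (by
                intro z hzz
                rw [Finset.mem_Icc]
                constructor <;> (intro j; have := abs_le.1 (hzz.2 j)) <;>
                  [exact this.1; exact this.2])
            refine le_trans (le_of_eq ?_) (le_trans hb ?_)
            · rfl
            have hprod : ((∏ j, ((B i k j) + 1 - -(B i k j)).toNat : ℕ) : ℝ≥0∞)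
                ≤ ENNReal.ofReal ((2:ℝ)^(k+3) * (5 * 2^i * (n:ℝ))^(d-1)) := by
              rw [← ENNReal.ofReal_natCast]
              apply ENNReal.ofReal_le_ofReal
              push_cast [Nat.cast_prod]
              have hsplit := Finset.mul_prod_erase Finset.univ
                (fun j => (((B i k j) + 1 - -(B i k j)).toNat : ℝ)) (Finset.mem_univ ℓ)
              rw [← hsplit]
              have hfl : (((B i k ℓ) + 1 - -(B i k ℓ)).toNat : ℝ) ≤ (2:ℝ)^(k+3) := by
                have hBl : B i k ℓ = 2^(k+1) := by simp [hB]
                rw [hBl]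
                have hnn : (0:ℤ) ≤ 2^(k+1) + 1 - -(2^(k+1)) := by
                  have hp : (0:ℤ) < 2^(k+1) := pow_pos (by norm_num) _
                  linarith
                have := Int.toNat_of_nonneg hnn
                have hc : ((((2:ℤ)^(k+1) + 1 - -(2^(k+1))).toNat : ℤ) : ℝ) ≤ (2:ℝ)^(k+3) := by
                  rw [this]
                  push_cast
                  have h1 : (1:ℝ) ≤ 2^(k+1) := one_le_pow₀ (by norm_num)
                  have h2 : (2:ℝ)^(k+3) = 4 * 2^(k+1) := by ring
                  linarith
                exact_mod_cast hc
              have hfo : ∀ j ∈ Finset.univ.erase ℓ,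
                  (((B i k j) + 1 - -(B i k j)).toNat : ℝ) ≤ 5 * 2^i * (n:ℝ) := by
                intro j hj
                have hje := Finset.ne_of_mem_erase hj
                have hBj : B i k j = 2^(i+1)*(n:ℤ) := by simp [hB, hje]
                rw [hBj]
                have hnn : (0:ℤ) ≤ 2^(i+1)*(n:ℤ) + 1 - -(2^(i+1)*(n:ℤ)) := by
                  have hp : (0:ℤ) < 2^(i+1) := pow_pos (by norm_num) _
                  have hnz : (1:ℤ) ≤ (n:ℤ) := by exact_mod_cast hn
                  nlinarith
                have hc : ((((2:ℤ)^(i+1)*(n:ℤ) + 1 - -(2^(i+1)*(n:ℤ))).toNat : ℤ) : ℝ)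
                    ≤ 5 * 2^i * (n:ℝ) := by
                  rw [Int.toNat_of_nonneg hnn]
                  push_cast
                  have h2i : (1:ℝ) ≤ 2^i := one_le_pow₀ (by norm_num)
                  have hps : (2:ℝ)^(i+1) = 2 * 2^i := by ring
                  have h1a : (2:ℝ)^i * 1 ≤ 2^i * (n:ℝ) :=
                    mul_le_mul_of_nonneg_left hn1 (le_trans zero_le_one h2i)
                  nlinarith
                exact_mod_cast hc
              calc (((B i k ℓ) + 1 - -(B i k ℓ)).toNat : ℝ)
                    * ∏ j ∈ Finset.univ.erase ℓ, (((B i k j) + 1 - -(B i k j)).toNat : ℝ)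
                  ≤ (2:ℝ)^(k+3) * ∏ j ∈ Finset.univ.erase ℓ, (5 * 2^i * (n:ℝ)) := by
                    apply mul_le_mul hfl
                    · exact Finset.prod_le_prod (fun j _ => by positivity) hfo
                    · exact Finset.prod_nonneg (fun j _ => by positivity)
                    · positivity
                _ = (2:ℝ)^(k+3) * (5 * 2^i * (n:ℝ))^(d-1) := by
                    rw [Finset.prod_const, Finset.card_erase_of_mem (Finset.mem_univ ℓ),
                      Finset.card_univ, Fintype.card_fin]
            calc ((∏ j, ((B i k j) + 1 - -(B i k j)).toNat : ℕ) : ℝ≥0∞)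
                  * ENNReal.ofReal (q^i * ((2:ℝ)^k) ^ (-δ))
                ≤ ENNReal.ofReal ((2:ℝ)^(k+3) * (5 * 2^i * (n:ℝ))^(d-1))
                  * ENNReal.ofReal (q^i * ((2:ℝ)^k) ^ (-δ)) := mul_le_mul_left hprod _
              _ = ENNReal.ofReal ((2^(k+3) * (5 * 2^i * (n:ℝ))^(d-1)) * (q^i * ((2:ℝ)^k) ^ (-δ))) := by
                  rw [← ENNReal.ofReal_mul (by positivity)]
          · rw [if_neg hck]
            have : ∀ x : Fin d → ℤ, T i k x = 0 := by
              intro x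
              simp only [hT]
              apply if_neg
              intro hcc
              exact hck hcc.1
            simp [this]
        refine le_trans (ENNReal.tsum_le_tsum hstep1) ?_
        -- sum over k: geometric with ratio ρ, truncated at K
        set K := Nat.log 2 (2^(i+2)*n) with hK
        have hM0 : 2^(i+2)*n ≠ 0 := by positivity
        have hvanish : ∀ k ∉ Finset.range (K+1),
            (if 2^k ≤ 2^(i+2)*n then
              ENNReal.ofReal ((2^(k+3) * (5 * 2^i * (n:ℝ))^(d-1)) * (q^i * ((2:ℝ)^k) ^ (-δ)))
             else 0) = 0 := by
          intro k hk
          rw [Finset.mem_range, not_lt] at hk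
          apply if_neg
          intro hcc
          have := (Nat.le_log_iff_pow_le one_lt_two hM0).2 hcc
          omega
        rw [tsum_eq_sum hvanish]
        have hterm : ∀ k ∈ Finset.range (K+1),
            (if 2^k ≤ 2^(i+2)*n then
              ENNReal.ofReal ((2^(k+3) * (5 * 2^i * (n:ℝ))^(d-1)) * (q^i * ((2:ℝ)^k) ^ (-δ)))
             else 0)
            ≤ ENNReal.ofReal ((8 * (5 * 2^i * (n:ℝ))^(d-1) * q^i) * ρ^k) := by
          intro k _
          have hle : (2:ℝ)^(k+3) * (5 * 2^i * (n:ℝ))^(d-1) * (q^i * ((2:ℝ)^k) ^ (-δ))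
              ≤ (8 * (5 * 2^i * (n:ℝ))^(d-1) * q^i) * ρ^k := by
            apply le_of_eq
            have e1 : ((2:ℝ)^k) ^ (-δ) = (2:ℝ) ^ ((k:ℝ) * (-δ)) := by
              rw [← Real.rpow_natCast (2:ℝ) k, ← Real.rpow_mul (by norm_num)]
            have e2 : (2:ℝ)^(k+3) = 8 * (2:ℝ) ^ (k:ℝ) := by
              rw [Real.rpow_natCast]; ring
            have e3 : (2:ℝ) ^ (k:ℝ) * (2:ℝ) ^ ((k:ℝ) * (-δ)) = ρ^k := by
              rw [← Real.rpow_add (by norm_num), hρ, ← Real.rpow_natCast ((2:ℝ) ^ ((1:ℝ) - δ)) k,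
                ← Real.rpow_mul (by norm_num)]
              congr 1
              ring
            rw [e1, e2, ← e3]
            ring
          split_ifs
          · exact ENNReal.ofReal_le_ofReal hle
          · exact zero_le
        refine le_trans (Finset.sum_le_sum hterm) ?_
        rw [← ENNReal.ofReal_sum_of_nonneg (fun k _ => by
          have hqi : (0:ℝ) ≤ q^i := pow_nonneg hq0.le i
          have hp : (0:ℝ) ≤ (5 * 2^i * (n:ℝ))^(d-1) := by positivity
          have hρk : (0:ℝ) ≤ ρ^k := pow_nonneg (by linarith) k
          exact mul_nonneg (mul_nonneg (mul_nonneg (by norm_num) hp) hqi) hρk)]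
        apply ENNReal.ofReal_le_ofReal
        rw [← Finset.mul_sum]
        have hgeom : ∑ k ∈ Finset.range (K+1), ρ^k ≤ ρ^(K+1) * (ρ-1)⁻¹ := by
          rw [geom_sum_eq (by linarith : ρ ≠ 1)]
          rw [div_eq_mul_inv]
          apply mul_le_mul_of_nonneg_right _ (inv_nonneg.2 (by linarith))
          linarith
        have hρK : ρ^(K+1) ≤ ρ * (2^i * (n:ℝ) * 4) ^ ((1:ℝ) - δ) := by
          have h2K : (2:ℕ)^K ≤ 2^(i+2)*n := Nat.pow_log_le_self 2 hM0
          have h2KR : (2:ℝ)^K ≤ 2^(i+2)*(n:ℝ) := by exact_mod_cast h2K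
          have : ρ^(K+1) = ρ * ((2:ℝ)^K) ^ ((1:ℝ) - δ) := by
            rw [pow_succ, hρ, ← Real.rpow_natCast ((2:ℝ) ^ ((1:ℝ) - δ)) K,
              ← Real.rpow_mul (by norm_num), mul_comm ((1:ℝ) - δ) (K:ℝ),
              Real.rpow_mul (by norm_num), Real.rpow_natCast]
            ring
          rw [this]
          apply mul_le_mul_of_nonneg_left _ (by linarith)
          apply Real.rpow_le_rpow (by positivity) _ (by linarith)
          calc ((2:ℝ)^K) ≤ 2^(i+2)*(n:ℝ) := h2KR
            _ = 2^i * (n:ℝ) * 4 := by ring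
          -- continue
        calc (8 * (5 * 2^i * (n:ℝ))^(d-1) * q^i) * ∑ k ∈ Finset.range (K+1), ρ^k
            ≤ (8 * (5 * 2^i * (n:ℝ))^(d-1) * q^i) * (ρ^(K+1) * (ρ-1)⁻¹) := by
              apply mul_le_mul_of_nonneg_left hgeom
              have hqi : (0:ℝ) ≤ q^i := pow_nonneg hq0.le i
              have hp : (0:ℝ) ≤ (5 * 2^i * (n:ℝ))^(d-1) := by positivity
              nlinarith
          _ ≤ (8 * (5 * 2^i * (n:ℝ))^(d-1) * q^i) * ((ρ * (2^i * (n:ℝ) * 4) ^ ((1:ℝ) - δ)) * (ρ-1)⁻¹) := by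
              apply mul_le_mul_of_nonneg_left _ (by positivity)
              apply mul_le_mul_of_nonneg_right hρK (inv_nonneg.2 (by linarith))
          _ ≤ (8 * (ρ-1)⁻¹ * 8 * 5^(d-1) * (n:ℝ) ^ ((d:ℝ) - δ)) * (ρ/8)^i := by
              set w : ℝ := 2^i * (n:ℝ) with hwdef
              have hw0 : (0:ℝ) < w := by positivity
              have h5w : (5:ℝ) * 2^i * (n:ℝ) = 5 * w := by rw [hwdef]; ring
              have hA4 : (2^i * (n:ℝ) * 4) ^ ((1:ℝ)-δ) ≤ 4 * w ^ ((1:ℝ)-δ) := by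
                rw [show (2:ℝ)^i * (n:ℝ) * 4 = w * 4 from by rw [hwdef],
                  Real.mul_rpow (le_of_lt hw0) (by norm_num)]
                have h44 : (4:ℝ) ^ ((1:ℝ)-δ) ≤ 4 := by
                  calc (4:ℝ) ^ ((1:ℝ)-δ) ≤ 4 ^ (1:ℝ) :=
                        Real.rpow_le_rpow_of_exponent_le (by norm_num) (by linarith)
                    _ = 4 := by norm_num
                have hwr : (0:ℝ) ≤ w ^ ((1:ℝ)-δ) := Real.rpow_nonneg (le_of_lt hw0) _
                nlinarith
              have hstep : ρ * (2^i*(n:ℝ)*4) ^ ((1:ℝ)-δ) ≤ 2 * (4 * w ^ ((1:ℝ)-δ)) :=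
                mul_le_mul hρ2.le hA4 (Real.rpow_nonneg (by positivity) _) (by norm_num)
              have hqi : (0:ℝ) ≤ q^i := pow_nonneg hq0.le i
              have hF : (0:ℝ) ≤ 8 * (5 * 2^i * (n:ℝ))^(d-1) * q^i := by
                have : (0:ℝ) ≤ (5 * 2^i * (n:ℝ))^(d-1) := by positivity
                nlinarith
              have hcast : ((d-1:ℕ):ℝ) = (d:ℝ) - 1 := by
                have : (1:ℕ) ≤ d := hd
                push_cast [Nat.cast_sub this]
                ring
              have hww : w^(d-1) * w ^ ((1:ℝ)-δ) = w ^ ((d:ℝ)-δ) := by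
                rw [← Real.rpow_natCast w (d-1), ← Real.rpow_add hw0, hcast]
                congr 1; ring
              have hwsplit : w ^ ((d:ℝ)-δ) = ((2:ℝ)^i) ^ ((d:ℝ)-δ) * (n:ℝ) ^ ((d:ℝ)-δ) := by
                rw [hwdef]
                exact Real.mul_rpow (by positivity) (le_of_lt hn0)
              have h2split : ((2:ℝ)^i) ^ ((d:ℝ)-δ) = ((2:ℝ)^(d-1))^i * ρ^i := by
                rw [show (d:ℝ)-δ = (((d-1:ℕ)):ℝ) + ((1:ℝ)-δ) from by rw [hcast]; ring,
                  Real.rpow_add (by positivity)]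
                congr 1
                · rw [Real.rpow_natCast, ← pow_mul, ← pow_mul, mul_comm]
                · rw [hρ, ← Real.rpow_natCast (2:ℝ) i, ← Real.rpow_mul (by norm_num),
                    ← Real.rpow_natCast ((2:ℝ)^((1:ℝ)-δ)) i, ← Real.rpow_mul (by norm_num)]
                  congr 1; ring
              have h2d : (2:ℝ)^(d+2) = 2^(d-1) * 8 := by
                rw [show d+2 = (d-1)+3 from by omega, pow_add]; norm_num
              have hq2 : q * 2^(d-1) = 8⁻¹ := by
                rw [hq, h2d, mul_inv]
                have hcc : ((2:ℝ)^(d-1))⁻¹ * 2^(d-1) = 1 := inv_mul_cancel₀ (by positivity)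
                calc ((2:ℝ)^(d-1))⁻¹ * (8:ℝ)⁻¹ * 2^(d-1)
                    = (((2:ℝ)^(d-1))⁻¹ * 2^(d-1)) * 8⁻¹ := by ring
                  _ = 8⁻¹ := by rw [hcc]; ring
              have hkey : q^i * (w^(d-1) * w ^ ((1:ℝ)-δ)) = (ρ/8)^i * (n:ℝ) ^ ((d:ℝ)-δ) := by
                rw [hww, hwsplit, h2split]
                have : q^i * (((2:ℝ)^(d-1))^i * ρ^i) = (ρ/8)^i := by
                  rw [← mul_pow, ← mul_pow]
                  congr 1
                  rw [← mul_assoc, hq2]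
                  ring
                calc q^i * ((((2:ℝ)^(d-1))^i * ρ^i) * (n:ℝ) ^ ((d:ℝ)-δ))
                    = (q^i * (((2:ℝ)^(d-1))^i * ρ^i)) * (n:ℝ) ^ ((d:ℝ)-δ) := by ring
                  _ = (ρ/8)^i * (n:ℝ) ^ ((d:ℝ)-δ) := by rw [this]
              calc (8 * (5 * 2^i * (n:ℝ))^(d-1) * q^i)
                    * ((ρ * (2^i * (n:ℝ) * 4) ^ ((1:ℝ) - δ)) * (ρ-1)⁻¹)
                  ≤ (8 * (5 * 2^i * (n:ℝ))^(d-1) * q^i)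
                    * ((2 * (4 * w ^ ((1:ℝ)-δ))) * (ρ-1)⁻¹) := by
                    apply mul_le_mul_of_nonneg_left _ hF
                    exact mul_le_mul_of_nonneg_right hstep (inv_nonneg.2 (by linarith))
                _ = 64 * 5^(d-1) * (ρ-1)⁻¹ * (q^i * (w^(d-1) * w ^ ((1:ℝ)-δ))) := by
                    rw [h5w, mul_pow]
                    ring
                _ = 64 * 5^(d-1) * (ρ-1)⁻¹ * ((ρ/8)^i * (n:ℝ)^((d:ℝ)-δ)) := by rw [hkey]
                _ = (8 * (ρ-1)⁻¹ * 8 * 5^(d-1) * (n:ℝ)^((d:ℝ)-δ)) * (ρ/8)^i := by ring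
    _ ≤ ENNReal.ofReal ((8 * (ρ-1)⁻¹ * 8 * 5^(d-1) * (n:ℝ) ^ ((d:ℝ) - δ)) * (1 - ρ/8)⁻¹) := by
        apply tsum_ofReal_geometric _ _ _ hσ0 hσ1
        have h1 : (0:ℝ) ≤ (ρ-1)⁻¹ := inv_nonneg.2 (by linarith)
        have h2 : (0:ℝ) ≤ (n:ℝ) ^ ((d:ℝ) - δ) := Real.rpow_nonneg (le_of_lt hn0) _
        positivity
    _ ≤ _ := by
        apply ENNReal.ofReal_le_ofReal
        apply le_of_eq
        ring

lemma coord_le_norm {d : ℕ} (v : E d) (i : Fin d) : |v i| ≤ ‖v‖ := by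
  rw [EuclideanSpace.norm_eq]
  have h1 : |v i| = Real.sqrt (‖v i‖ ^ 2) := by
    rw [Real.sqrt_sq_eq_abs]; simp
  rw [h1]
  apply Real.sqrt_le_sqrt
  exact Finset.single_le_sum (f := fun j => ‖v j‖ ^ 2)
    (fun j _ => sq_nonneg _) (Finset.mem_univ i)

lemma opnorm_le_sum {d : ℕ} (L : E d →L[ℝ] ℝ) :
    ‖L‖ ≤ ∑ j : Fin d, |L (EuclideanSpace.single j 1)| := by
  apply ContinuousLinearMap.opNorm_le_bound _
    (Finset.sum_nonneg fun j _ => abs_nonneg _)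
  intro v
  have hv : v = ∑ j : Fin d, v j • EuclideanSpace.single j (1:ℝ) := by
    ext i
    rw [WithLp.ofLp_sum, Finset.sum_apply]
    simp [EuclideanSpace.single_apply]
  calc ‖L v‖ = |∑ j : Fin d, v j * L (EuclideanSpace.single j 1)| := by
        conv_lhs => rw [hv]
        rw [map_sum]
        simp [smul_eq_mul]
    _ ≤ ∑ j : Fin d, |v j * L (EuclideanSpace.single j 1)| :=
        Finset.abs_sum_le_sum_abs _ _
    _ ≤ ∑ j : Fin d, ‖v‖ * |L (EuclideanSpace.single j 1)| := by
        apply Finset.sum_le_sum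
        intro j _
        rw [abs_mul]
        exact mul_le_mul_of_nonneg_right (coord_le_norm v j) (abs_nonneg _)
    _ = (∑ j : Fin d, |L (EuclideanSpace.single j 1)|) * ‖v‖ := by
        rw [Finset.sum_mul]
        exact Finset.sum_congr rfl fun j _ => mul_comm _ _

lemma bracket2_ge_abs {d : ℕ} (G : ℝ → E d → ℝ) (s : ℝ) (u : E d) :
    |G s u| ≤ bracket d G 2 s u := by
  unfold bracket
  norm_num
  have h1 : (0:ℝ) ≤ ∑ j : Fin d, |pd d (G s) j u| :=
    Finset.sum_nonneg fun j _ => abs_nonneg _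
  have h2 : (0:ℝ) ≤ ∑ i : Fin d, ∑ j : Fin d, |pd d (fun w => pd d (G s) j w) i u| :=
    Finset.sum_nonneg fun i _ => Finset.sum_nonneg fun j _ => abs_nonneg _
  linarith

lemma bracket2_ge_grad {d : ℕ} (G : ℝ → E d → ℝ) (s : ℝ) (u : E d) :
    ‖fderiv ℝ (G s) u‖ ≤ bracket d G 2 s u := by
  have h0 := opnorm_le_sum (fderiv ℝ (G s) u)
  refine le_trans h0 ?_
  unfold bracket
  norm_num
  have h2 : (0:ℝ) ≤ ∑ i : Fin d, ∑ j : Fin d, |pd d (fun w => pd d (G s) j w) i u| :=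
    Finset.sum_nonneg fun i _ => Finset.sum_nonneg fun j _ => abs_nonneg _
  have h3 : (0:ℝ) ≤ |G s u| := abs_nonneg _
  have he : ∑ j : Fin d, |(fderiv ℝ (G s) u) (EuclideanSpace.single j 1)|
      = ∑ j : Fin d, |pd d (G s) j u| := rfl
  rw [he]
  linarith

lemma bracket_nonneg {d : ℕ} (G : ℝ → E d → ℝ) (k : ℕ) (s : ℝ) (u : E d) :
    0 ≤ bracket d G k s u := by
  unfold bracket
  have h1 : (0:ℝ) ≤ ∑ j : Fin d, |pd d (G s) j u| :=
    Finset.sum_nonneg fun j _ => abs_nonneg _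
  have h2 : (0:ℝ) ≤ ∑ i : Fin d, ∑ j : Fin d, |pd d (fun w => pd d (G s) j w) i u| :=
    Finset.sum_nonneg fun i _ => Finset.sum_nonneg fun j _ => abs_nonneg _
  have h3 : (0:ℝ) ≤ |G s u| := abs_nonneg _
  split_ifs <;> linarith

lemma memS2_decay {T : ℝ} {d : ℕ} (hT : 0 ≤ T) {G : ℝ → E d → ℝ} (hG : MemS2 T d G) :
    ∃ A : ℝ, 0 < A ∧ ∀ s ∈ Set.Icc (0:ℝ) T, ∀ u : E d,
      |G s u| ≤ A * (1 + ‖u‖^(d+2))⁻¹ ∧ ‖fderiv ℝ (G s) u‖ ≤ A * (1 + ‖u‖^(d+2))⁻¹ := by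
  obtain ⟨B0, hB0⟩ := hG.bdd 0
  obtain ⟨B1, hB1⟩ := hG.bdd (d+2)
  have key : ∀ s ∈ Set.Icc (0:ℝ) T, ∀ u : E d,
      (1 + ‖u‖^(d+2)) * bracket d G 2 s u ≤ B0 + B1 := by
    intro s hs u
    have k0 : ‖u‖ ^ 0 * bracket d G 2 s u ≤ B0 :=
      hB0 (Set.mem_range_self (⟨⟨s, hs⟩, u⟩ : Set.Icc (0:ℝ) T × E d))
    have k1 : ‖u‖ ^ (d+2) * bracket d G 2 s u ≤ B1 :=
      hB1 (Set.mem_range_self (⟨⟨s, hs⟩, u⟩ : Set.Icc (0:ℝ) T × E d))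
    rw [pow_zero, one_mul] at k0
    nlinarith [bracket_nonneg G 2 s u]
  refine ⟨B0 + B1 + 1, ?_, ?_⟩
  · have h := key 0 (Set.mem_Icc.2 ⟨le_refl 0, hT⟩) 0
    have hb := bracket_nonneg G 2 0 0
    have hw : (0:ℝ) < 1 + ‖(0 : E d)‖^(d+2) := by positivity
    nlinarith
  · intro s hs u
    have hk := key s hs u
    have hw : (0:ℝ) < 1 + ‖u‖^(d+2) := by positivity
    have hbr : bracket d G 2 s u ≤ (B0 + B1 + 1) * (1 + ‖u‖^(d+2))⁻¹ := by
      have h' : bracket d G 2 s u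
          = ((1 + ‖u‖^(d+2)) * bracket d G 2 s u) * (1 + ‖u‖^(d+2))⁻¹ := by
        field_simp
      rw [h']
      apply mul_le_mul_of_nonneg_right _ (inv_nonneg.2 hw.le)
      linarith
    constructor
    · exact le_trans (bracket2_ge_abs G s u) hbr
    · exact le_trans (bracket2_ge_grad G s u) hbr

lemma W_comp {d : ℕ} {u w : E d} (h : ‖u‖ ≤ ‖w‖ + 1) :
    (1 + ‖u‖^(d+2)) ≤ 2^(d+3) * (1 + ‖w‖^(d+2)) := by
  have h1 : ‖u‖^(d+2) ≤ (‖w‖ + 1)^(d+2) :=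
    pow_le_pow_left₀ (norm_nonneg _) h _
  have h2 : (‖w‖ + 1) ≤ 2 * max ‖w‖ 1 := by
    rcases max_cases ‖w‖ 1 with ⟨hm, hc⟩ | ⟨hm, hc⟩ <;> rw [hm] <;> linarith [norm_nonneg w]
  have h3 : (‖w‖ + 1)^(d+2) ≤ (2 * max ‖w‖ 1)^(d+2) :=
    pow_le_pow_left₀ (by positivity) h2 _
  have h4 : (2 * max ‖w‖ 1)^(d+2) = 2^(d+2) * (max ‖w‖ 1)^(d+2) := mul_pow _ _ _
  have h5 : (max ‖w‖ 1)^(d+2) ≤ 1 + ‖w‖^(d+2) := by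
    rcases max_cases ‖w‖ 1 with ⟨hm, hc⟩ | ⟨hm, hc⟩ <;> rw [hm]
    · linarith
    · simp only [one_pow]
      have : (0:ℝ) ≤ ‖w‖^(d+2) := by positivity
      linarith
  have h6 : (1:ℝ) ≤ 2^(d+2) := one_le_pow₀ (by norm_num)
  have h7 : (2:ℝ)^(d+3) = 2 * 2^(d+2) := by ring
  have h8 : (0:ℝ) ≤ ‖w‖^(d+2) := by positivity
  nlinarith

lemma seg_norm_le {d : ℕ} {u v w : E d} (hw : w ∈ segment ℝ u v) :
    ‖w - u‖ ≤ ‖v - u‖ := by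
  obtain ⟨a, b, ha, hb, hab, rfl⟩ := hw
  have : a • u + b • v - u = b • (v - u) := by
    rw [smul_sub]
    have ha' : a = 1 - b := by linarith
    rw [ha']
    module
  rw [this, norm_smul, Real.norm_eq_abs, abs_of_nonneg hb]
  have hb1 : b ≤ 1 := by linarith
  nlinarith [norm_nonneg (v - u)]

lemma lip_decay {T : ℝ} {d : ℕ} {G : ℝ → E d → ℝ} {A : ℝ}
    (hsm : ∀ s ∈ Set.Icc (0:ℝ) T, ContDiff ℝ 2 (G s))
    (hA : ∀ s ∈ Set.Icc (0:ℝ) T, ∀ u : E d, ‖fderiv ℝ (G s) u‖ ≤ A * (1 + ‖u‖^(d+2))⁻¹)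
    (hA0 : 0 ≤ A) :
    ∀ s ∈ Set.Icc (0:ℝ) T, ∀ u v : E d, ‖v - u‖ ≤ 1 →
      |G s v - G s u| ≤ 2^(d+3) * A * (1 + ‖u‖^(d+2))⁻¹ * ‖v - u‖ := by
  intro s hs u v huv
  have hconv : Convex ℝ (segment ℝ u v) := convex_segment u v
  have hdiff : ∀ x ∈ segment ℝ u v, DifferentiableAt ℝ (G s) x := fun x _ =>
    ((hsm s hs).differentiable (by norm_num)) x
  have hbound : ∀ w ∈ segment ℝ u v,
      ‖fderiv ℝ (G s) w‖ ≤ 2^(d+3) * A * (1 + ‖u‖^(d+2))⁻¹ := by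
    intro w hw
    have h1 : ‖u‖ ≤ ‖w‖ + 1 := by
      have h2 : ‖u - w‖ ≤ 1 := by
        have := seg_norm_le hw
        calc ‖u - w‖ = ‖w - u‖ := by rw [norm_sub_rev]
          _ ≤ ‖v - u‖ := this
          _ ≤ 1 := huv
      calc ‖u‖ = ‖w + (u - w)‖ := by congr 1; abel
        _ ≤ ‖w‖ + ‖u - w‖ := norm_add_le _ _
        _ ≤ ‖w‖ + 1 := by linarith
    have hWc := W_comp (d := d) h1
    have hWw : (0:ℝ) < 1 + ‖w‖^(d+2) := by positivity
    have hWu : (0:ℝ) < 1 + ‖u‖^(d+2) := by positivity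
    have hinv : (1 + ‖w‖^(d+2))⁻¹ ≤ 2^(d+3) * (1 + ‖u‖^(d+2))⁻¹ := by
      have key : (1:ℝ) / (1 + ‖w‖^(d+2)) ≤ 2^(d+3) / (1 + ‖u‖^(d+2)) := by
        rw [div_le_div_iff₀ hWw hWu]
        nlinarith
      calc (1 + ‖w‖^(d+2))⁻¹ = 1 / (1 + ‖w‖^(d+2)) := (one_div _).symm
        _ ≤ 2^(d+3) / (1 + ‖u‖^(d+2)) := key
        _ = 2^(d+3) * (1 + ‖u‖^(d+2))⁻¹ := by rw [div_eq_mul_inv]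
    calc ‖fderiv ℝ (G s) w‖ ≤ A * (1 + ‖w‖^(d+2))⁻¹ := hA s hs w
      _ ≤ A * (2^(d+3) * (1 + ‖u‖^(d+2))⁻¹) := mul_le_mul_of_nonneg_left hinv hA0
      _ = 2^(d+3) * A * (1 + ‖u‖^(d+2))⁻¹ := by ring
  have := hconv.norm_image_sub_le_of_norm_fderiv_le hdiff hbound
    (left_mem_segment ℝ u v) (right_mem_segment ℝ u v)
  calc |G s v - G s u| = ‖G s v - G s u‖ := rfl
    _ ≤ 2^(d+3) * A * (1 + ‖u‖^(d+2))⁻¹ * ‖v - u‖ := this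

lemma tsum2_ofReal_le {ι κ : Type*} {g : ι → κ → ℝ} (hg : ∀ i j, 0 ≤ g i j) {B : ℝ}
    (hB : 0 ≤ B) (h : ∑' i, ∑' j, ENNReal.ofReal (g i j) ≤ ENNReal.ofReal B) :
    ∑' i, ∑' j, g i j ≤ B := by
  have hx : ∀ i, ENNReal.ofReal (∑' j, g i j) = ∑' j, ENNReal.ofReal (g i j) := by
    intro i
    have hfin : ∑' j, ENNReal.ofReal (g i j) ≠ ⊤ := by
      have hle : ∑' j, ENNReal.ofReal (g i j) ≤ ENNReal.ofReal B :=
        le_trans (ENNReal.le_tsum i) h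
      exact (hle.trans_lt ENNReal.ofReal_lt_top).ne
    have hs : Summable (g i) := by
      have h2 := ENNReal.summable_toReal hfin
      have he : (fun j => (ENNReal.ofReal (g i j)).toReal) = g i :=
        funext fun j => ENNReal.toReal_ofReal (hg i j)
      rwa [he] at h2
    exact ENNReal.ofReal_tsum_of_nonneg (hg i) hs
  apply tsum_ofReal_le (fun i => tsum_nonneg (fun j => hg i j)) hB
  calc ∑' i, ENNReal.ofReal (∑' j, g i j) = ∑' i, ∑' j, ENNReal.ofReal (g i j) :=
        tsum_congr hx
    _ ≤ ENNReal.ofReal B := h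

lemma min_le_rpow {θ t : ℝ} (hθ0 : 0 ≤ θ) (hθ1 : θ ≤ 1) (ht : 0 < t) :
    min 1 t ≤ t ^ θ := by
  rcases le_total 1 t with hc | hc
  · rw [min_eq_left hc]
    have := Real.rpow_le_rpow_of_exponent_le hc hθ0
    simpa using this
  · rw [min_eq_right hc]
    have := Real.rpow_le_rpow_of_exponent_ge ht hc hθ1
    simpa using this

lemma cross_bound {T : ℝ} {d : ℕ} (hd : 0 < d) {G Gm Gp : ℝ → E d → ℝ} {A : ℝ} (hA0 : 0 < A)
    (hglue : ∀ s u, G s u = if u (lastIdx d hd) < 0 then Gm s u else Gp s u)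
    (hstar : ∀ s ∈ Set.Icc (0:ℝ) T, ∀ u : E d, u (lastIdx d hd) = 0 → Gm s u = Gp s u)
    (hsmm : ∀ s ∈ Set.Icc (0:ℝ) T, ContDiff ℝ 2 (Gm s))
    (hsmp : ∀ s ∈ Set.Icc (0:ℝ) T, ContDiff ℝ 2 (Gp s))
    (hm : ∀ s ∈ Set.Icc (0:ℝ) T, ∀ u : E d,
      |Gm s u| ≤ A * (1 + ‖u‖^(d+2))⁻¹ ∧ ‖fderiv ℝ (Gm s) u‖ ≤ A * (1 + ‖u‖^(d+2))⁻¹)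
    (hp : ∀ s ∈ Set.Icc (0:ℝ) T, ∀ u : E d,
      |Gp s u| ≤ A * (1 + ‖u‖^(d+2))⁻¹ ∧ ‖fderiv ℝ (Gp s) u‖ ≤ A * (1 + ‖u‖^(d+2))⁻¹) :
    ∀ s ∈ Set.Icc (0:ℝ) T, ∀ u v : E d, u (lastIdx d hd) < 0 → 0 ≤ v (lastIdx d hd) →
      |G s v - G s u| ≤ (2^(d+4) * A) * (min 1 ‖v - u‖
        * ((1 + ‖u‖^(d+2))⁻¹ + (1 + ‖v‖^(d+2))⁻¹)) := by
  intro s hs u v hu hv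
  have hGu : G s u = Gm s u := by rw [hglue]; exact if_pos hu
  have hGv : G s v = Gp s v := by rw [hglue]; exact if_neg (not_lt.2 hv)
  have hWu : (0:ℝ) < (1 + ‖u‖^(d+2))⁻¹ := by positivity
  have hWv : (0:ℝ) < (1 + ‖v‖^(d+2))⁻¹ := by positivity
  have hpow : (1:ℝ) ≤ 2^(d+4) := one_le_pow₀ (by norm_num)
  rcases le_or_gt 1 ‖v - u‖ with hc | hc
  · rw [min_eq_left hc]
    have h1 : |G s v - G s u| ≤ |Gp s v| + |Gm s u| := by
      rw [hGu, hGv]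
      exact abs_sub _ _
    have h2 := (hp s hs v).1
    have h3 := (hm s hs u).1
    have h4 : A * (1 + ‖u‖^(d+2))⁻¹ + A * (1 + ‖v‖^(d+2))⁻¹
        ≤ 2^(d+4) * A * (1 * ((1 + ‖u‖^(d+2))⁻¹ + (1 + ‖v‖^(d+2))⁻¹)) := by
      rw [one_mul]
      have hfac : 2^(d+4)*A*((1 + ‖u‖^(d+2))⁻¹ + (1 + ‖v‖^(d+2))⁻¹)
          - (A*(1 + ‖u‖^(d+2))⁻¹ + A*(1 + ‖v‖^(d+2))⁻¹)
          = (2^(d+4)-1)*(A*((1 + ‖u‖^(d+2))⁻¹ + (1 + ‖v‖^(d+2))⁻¹)) := by ring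
      have hnn : (0:ℝ) ≤ (2^(d+4)-1)*(A*((1 + ‖u‖^(d+2))⁻¹ + (1 + ‖v‖^(d+2))⁻¹)) :=
        mul_nonneg (by linarith) (mul_nonneg hA0.le (by positivity))
      linarith
    linarith
  · rw [min_eq_right hc.le]
    set ℓ := lastIdx d hd with hℓ
    have hvu : (0:ℝ) < v ℓ - u ℓ := by
      have : u ℓ < v ℓ := lt_of_lt_of_le hu hv
      linarith
    set t : ℝ := -(u ℓ) / (v ℓ - u ℓ) with htdef
    have ht0 : 0 < t := div_pos (by linarith) hvu
    have ht1 : t ≤ 1 := by rw [div_le_one hvu]; linarith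
    set w : E d := u + t • (v - u) with hwdef
    have hwl : w ℓ = 0 := by
      have happ : w ℓ = u ℓ + t * (v ℓ - u ℓ) := by
        rw [hwdef]
        simp [PiLp.add_apply, PiLp.smul_apply, PiLp.sub_apply, smul_eq_mul]
      rw [happ, htdef]
      field_simp
      ring
    have hwu : w - u = t • (v - u) := by rw [hwdef]; abel
    have hnwu : ‖w - u‖ ≤ ‖v - u‖ := by
      rw [hwu, norm_smul, Real.norm_eq_abs, abs_of_pos ht0]
      nlinarith [norm_nonneg (v - u)]
    have hwv : w - v = (1 - t) • (u - v) := by rw [hwdef]; module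
    have hnwv : ‖w - v‖ ≤ ‖v - u‖ := by
      rw [hwv, norm_smul, Real.norm_eq_abs, abs_of_nonneg (by linarith : (0:ℝ) ≤ 1 - t),
        norm_sub_rev u v]
      nlinarith [norm_nonneg (v - u)]
    have h1 := lip_decay hsmm (fun s' hs' u' => (hm s' hs' u').2) hA0.le s hs u w
      (le_trans hnwu hc.le)
    have h2 := lip_decay hsmp (fun s' hs' u' => (hp s' hs' u').2) hA0.le s hs v w
      (le_trans hnwv hc.le)
    have hsw := hstar s hs w hwl
    have hdecomp : G s v - G s u = (Gp s v - Gp s w) + (Gm s w - Gm s u) := by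
      rw [hGu, hGv, ← hsw]
      ring
    have habs : |G s v - G s u| ≤ |Gp s v - Gp s w| + |Gm s w - Gm s u| := by
      rw [hdecomp]
      exact abs_add_le _ _
    have h2' : |Gp s v - Gp s w| ≤ 2^(d+3) * A * (1 + ‖v‖^(d+2))⁻¹ * ‖v - u‖ := by
      have := h2
      rw [abs_sub_comm]
      refine le_trans this ?_
      apply mul_le_mul_of_nonneg_left hnwv
      positivity
    have h1' : |Gm s w - Gm s u| ≤ 2^(d+3) * A * (1 + ‖u‖^(d+2))⁻¹ * ‖v - u‖ := by
      refine le_trans h1 ?_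
      apply mul_le_mul_of_nonneg_left hnwu
      positivity
    have hfin : 2^(d+3) * A * (1 + ‖v‖^(d+2))⁻¹ * ‖v - u‖
        + 2^(d+3) * A * (1 + ‖u‖^(d+2))⁻¹ * ‖v - u‖
        ≤ 2^(d+4) * A * (‖v - u‖ * ((1 + ‖u‖^(d+2))⁻¹ + (1 + ‖v‖^(d+2))⁻¹)) := by
      have he : (2:ℝ)^(d+4) = 2 * 2^(d+3) := by ring
      rw [he]
      have hnv : (0:ℝ) ≤ ‖v - u‖ := norm_nonneg _
      have hq : (0:ℝ) ≤ 2^(d+3) * A := by positivity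
      nlinarith [mul_nonneg (mul_nonneg hq hWu.le) hnv, mul_nonneg (mul_nonneg hq hWv.le) hnv]
    linarith

end Stmt15

set_option maxHeartbeats 4000000 in
theorem stmt15 (d : ℕ) (hd : 0 < d) (γ cg T : ℝ) (hγ : γ ∈ Set.Ioo (0:ℝ) 2) (hcg : 0 < cg)
    (hT : 0 < T) (G : ℝ → E d → ℝ) (hG : MemSgamCalStar T d hd γ G) :
    ∃ C : ℝ, 0 < C ∧ ∀ n : ℕ, 1 ≤ n →
      (⨆ s : Set.Icc (0:ℝ) T, (n : ℝ) ^ γ / (n : ℝ) ^ d *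
        ∑' x : Fin d → ℤ, ∑' y : Fin d → ℤ,
          if x (lastIdx d hd) < 0 ∧ 0 ≤ y (lastIdx d hd) then
            |G s ((n : ℝ)⁻¹ • emb d y) - G s ((n : ℝ)⁻¹ • emb d x)| * pgam d cg γ (y - x)
          else 0)
      ≤ C := by
  classical
  obtain ⟨Gm, Gp, hm, hp, hglue, hstar⟩ := hG
  have hm2 : MemS2 T d Gm := by
    unfold MemSgamCal at hm
    split_ifs at hm
    · exact hm
    · exact hm.mem
  have hp2 : MemS2 T d Gp := by
    unfold MemSgamCal at hp
    split_ifs at hp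
    · exact hp
    · exact hp.mem
  obtain ⟨Am, hAm0, hAm⟩ := Stmt15.memS2_decay hT.le hm2
  obtain ⟨Ap, hAp0, hAp⟩ := Stmt15.memS2_decay hT.le hp2
  set A : ℝ := Am + Ap with hA
  have hA0 : 0 < A := by rw [hA]; linarith
  have hmA : ∀ s ∈ Set.Icc (0:ℝ) T, ∀ u : E d,
      |Gm s u| ≤ A * (1 + ‖u‖^(d+2))⁻¹ ∧ ‖fderiv ℝ (Gm s) u‖ ≤ A * (1 + ‖u‖^(d+2))⁻¹ := by
    intro s hs u
    obtain ⟨h1, h2⟩ := hAm s hs u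
    have hW : (0:ℝ) ≤ (1 + ‖u‖^(d+2))⁻¹ := by positivity
    have hle : Am * (1 + ‖u‖^(d+2))⁻¹ ≤ A * (1 + ‖u‖^(d+2))⁻¹ :=
      mul_le_mul_of_nonneg_right (by rw [hA]; linarith) hW
    exact ⟨le_trans h1 hle, le_trans h2 hle⟩
  have hpA : ∀ s ∈ Set.Icc (0:ℝ) T, ∀ u : E d,
      |Gp s u| ≤ A * (1 + ‖u‖^(d+2))⁻¹ ∧ ‖fderiv ℝ (Gp s) u‖ ≤ A * (1 + ‖u‖^(d+2))⁻¹ := by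
    intro s hs u
    obtain ⟨h1, h2⟩ := hAp s hs u
    have hW : (0:ℝ) ≤ (1 + ‖u‖^(d+2))⁻¹ := by positivity
    have hle : Ap * (1 + ‖u‖^(d+2))⁻¹ ≤ A * (1 + ‖u‖^(d+2))⁻¹ :=
      mul_le_mul_of_nonneg_right (by rw [hA]; linarith) hW
    exact ⟨le_trans h1 hle, le_trans h2 hle⟩
  have hcb := Stmt15.cross_bound hd hA0 hglue hstar hm2.smooth hp2.smooth hmA hpA
  obtain ⟨hγ0, hγ2⟩ := hγ
  set θ : ℝ := γ/2 with hθdef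
  set β : ℝ := (d:ℝ) + γ - θ with hβdef
  have hβd : (d:ℝ) < β := by rw [hβdef, hθdef]; linarith
  have hθ0 : 0 < θ := by rw [hθdef]; linarith
  have hθ1 : θ < 1 := by rw [hθdef]; linarith
  obtain ⟨C1, hC10, hC1⟩ := Stmt15.latticeI d hd hβd
  obtain ⟨C2, hC20, hC2⟩ := Stmt15.latticeM d hd hθ0 hθ1
  set ℓ : Fin d := lastIdx d hd with hℓ
  set K : ℝ := 2^(d+4) * A with hK
  have hK0 : 0 < K := by rw [hK]; positivity
  have h2θ : (0:ℝ) < 2^θ := Real.rpow_pos_of_pos (by norm_num) _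
  have h2θ1 : (1:ℝ) ≤ 2^θ := Real.one_le_rpow one_le_two hθ0.le
  set CC : ℝ := (K * cg) * (2 * (C1 * 2^θ * C2)) with hCC
  have hCC0 : 0 < CC := by
    rw [hCC]
    have h1 := mul_pos hK0 hcg
    have h2 := mul_pos (mul_pos hC10 h2θ) hC20
    nlinarith
  refine ⟨CC, hCC0, ?_⟩
  intro n hn
  have hn1 : (1:ℝ) ≤ (n:ℝ) := by exact_mod_cast hn
  have hn0 : (0:ℝ) < (n:ℝ) := by linarith
  have hexp : (d:ℝ) - β = -θ := by rw [hβdef]; ring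
  haveI : Nonempty (Set.Icc (0:ℝ) T) := ⟨⟨0, Set.mem_Icc.2 ⟨le_refl 0, hT.le⟩⟩⟩
  apply ciSup_le
  intro σ
  obtain ⟨s, hs⟩ := σ
  show (n : ℝ) ^ γ / (n : ℝ) ^ d *
      ∑' x : Fin d → ℤ, ∑' y : Fin d → ℤ,
        (if x ℓ < 0 ∧ 0 ≤ y ℓ then
          |G s ((n : ℝ)⁻¹ • emb d y) - G s ((n : ℝ)⁻¹ • emb d x)| * pgam d cg γ (y - x)
        else 0) ≤ CC
  have hgnn : ∀ x y : Fin d → ℤ, 0 ≤ (if x ℓ < 0 ∧ 0 ≤ y ℓ then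
      |G s ((n : ℝ)⁻¹ • emb d y) - G s ((n : ℝ)⁻¹ • emb d x)| * pgam d cg γ (y - x)
      else 0) := by
    intro x y
    split_ifs
    · apply mul_nonneg (abs_nonneg _)
      unfold pgam
      split_ifs
      · exact le_refl 0
      · positivity
    · exact le_refl 0
  have hzfact : ∀ x y : Fin d → ℤ, x ℓ < 0 → 0 ≤ y ℓ → (1:ℤ) ≤ (y - x) ℓ := by
    intro x y hx hy
    have he : (y - x) ℓ = y ℓ - x ℓ := rfl
    omega
  have hz1 : ∀ z : Fin d → ℤ, (1:ℤ) ≤ z ℓ → (1:ℝ) ≤ ‖emb d z‖ := by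
    intro z hz
    refine le_trans ?_ (Stmt15.emb_coord_le z ℓ)
    have h1 : (1:ℝ) ≤ (z ℓ : ℝ) := by exact_mod_cast hz
    exact le_trans h1 (le_abs_self _)
  -- pointwise real estimate
  have hptreal : ∀ x y : Fin d → ℤ, x ℓ < 0 → 0 ≤ y ℓ →
      |G s ((n : ℝ)⁻¹ • emb d y) - G s ((n : ℝ)⁻¹ • emb d x)| * pgam d cg γ (y - x)
      ≤ (K * cg * (n:ℝ)^(-θ)) * (‖emb d (y - x)‖^(-β) *
        ((1 + ‖(n:ℝ)⁻¹ • emb d x‖^(d+2))⁻¹ + (1 + ‖(n:ℝ)⁻¹ • emb d y‖^(d+2))⁻¹)) := by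
    intro x y hx hy
    have hul : ((n:ℝ)⁻¹ • emb d x) ℓ < 0 := by
      have he : ((n:ℝ)⁻¹ • emb d x) ℓ = (n:ℝ)⁻¹ * (x ℓ : ℝ) := by simp [emb]
      rw [he]
      apply mul_neg_of_pos_of_neg (inv_pos.2 hn0)
      exact_mod_cast hx
    have hvl : 0 ≤ ((n:ℝ)⁻¹ • emb d y) ℓ := by
      have he : ((n:ℝ)⁻¹ • emb d y) ℓ = (n:ℝ)⁻¹ * (y ℓ : ℝ) := by simp [emb]
      rw [he]
      apply mul_nonneg (inv_pos.2 hn0).le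
      exact_mod_cast hy
    have hzl := hzfact x y hx hy
    have hzn : (1:ℝ) ≤ ‖emb d (y - x)‖ := hz1 _ hzl
    have hzpos : (0:ℝ) < ‖emb d (y - x)‖ := lt_of_lt_of_le one_pos hzn
    have hne : (y - x) ≠ 0 := by
      intro h0
      rw [h0] at hzl
      simp at hzl
    have hpg : pgam d cg γ (y - x) = cg * ‖emb d (y - x)‖ ^ (-((d:ℝ)+γ)) := by
      unfold pgam
      rw [if_neg hne]
    have hnorm : ‖((n:ℝ)⁻¹ • emb d y) - ((n:ℝ)⁻¹ • emb d x)‖ = ‖emb d (y - x)‖ / (n:ℝ) := by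
      rw [show ((n:ℝ)⁻¹ • emb d y) - ((n:ℝ)⁻¹ • emb d x) = (n:ℝ)⁻¹ • emb d (y - x) from by
        rw [Stmt15.emb_sub, smul_sub]]
      rw [norm_smul, Real.norm_eq_abs, abs_inv, abs_of_pos hn0, div_eq_inv_mul]
    have hcbs := hcb s hs ((n:ℝ)⁻¹ • emb d x) ((n:ℝ)⁻¹ • emb d y) hul hvl
    have hmin : min 1 ‖((n:ℝ)⁻¹ • emb d y) - ((n:ℝ)⁻¹ • emb d x)‖
        ≤ (‖emb d (y - x)‖/(n:ℝ))^θ := by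
      rw [hnorm]
      exact Stmt15.min_le_rpow hθ0.le hθ1.le (by positivity)
    have hWx : (0:ℝ) ≤ (1 + ‖(n:ℝ)⁻¹ • emb d x‖^(d+2))⁻¹ := by positivity
    have hWy : (0:ℝ) ≤ (1 + ‖(n:ℝ)⁻¹ • emb d y‖^(d+2))⁻¹ := by positivity
    have hWs : (0:ℝ) ≤ (1 + ‖(n:ℝ)⁻¹ • emb d x‖^(d+2))⁻¹ + (1 + ‖(n:ℝ)⁻¹ • emb d y‖^(d+2))⁻¹ := by
      linarith
    have hpgnn : 0 ≤ cg * ‖emb d (y - x)‖ ^ (-((d:ℝ)+γ)) := by positivity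
    calc |G s ((n : ℝ)⁻¹ • emb d y) - G s ((n : ℝ)⁻¹ • emb d x)| * pgam d cg γ (y - x)
        = |G s ((n : ℝ)⁻¹ • emb d y) - G s ((n : ℝ)⁻¹ • emb d x)|
            * (cg * ‖emb d (y - x)‖ ^ (-((d:ℝ)+γ))) := by rw [hpg]
      _ ≤ (K * (min 1 ‖((n:ℝ)⁻¹ • emb d y) - ((n:ℝ)⁻¹ • emb d x)‖
            * ((1 + ‖(n:ℝ)⁻¹ • emb d x‖^(d+2))⁻¹ + (1 + ‖(n:ℝ)⁻¹ • emb d y‖^(d+2))⁻¹)))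
            * (cg * ‖emb d (y - x)‖ ^ (-((d:ℝ)+γ))) :=
          mul_le_mul_of_nonneg_right hcbs hpgnn
      _ ≤ (K * ((‖emb d (y - x)‖/(n:ℝ))^θ
            * ((1 + ‖(n:ℝ)⁻¹ • emb d x‖^(d+2))⁻¹ + (1 + ‖(n:ℝ)⁻¹ • emb d y‖^(d+2))⁻¹)))
            * (cg * ‖emb d (y - x)‖ ^ (-((d:ℝ)+γ))) := by
          apply mul_le_mul_of_nonneg_right _ hpgnn
          apply mul_le_mul_of_nonneg_left _ hK0.le
          exact mul_le_mul_of_nonneg_right hmin hWs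
      _ = (K * cg * (n:ℝ)^(-θ)) * (‖emb d (y - x)‖^(-β) *
            ((1 + ‖(n:ℝ)⁻¹ • emb d x‖^(d+2))⁻¹ + (1 + ‖(n:ℝ)⁻¹ • emb d y‖^(d+2))⁻¹)) := by
          have e1 : (‖emb d (y - x)‖/(n:ℝ))^θ = ‖emb d (y - x)‖^θ * (n:ℝ)^(-θ) := by
            rw [Real.div_rpow (norm_nonneg _) hn0.le, Real.rpow_neg hn0.le, div_eq_mul_inv]
          have e2 : ‖emb d (y - x)‖^θ * ‖emb d (y - x)‖^(-((d:ℝ)+γ))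
              = ‖emb d (y - x)‖^(-β) := by
            rw [← Real.rpow_add hzpos]
            congr 1
            rw [hβdef]; ring
          rw [e1, show K * (‖emb d (y - x)‖^θ * (n:ℝ)^(-θ)
              * ((1 + ‖(n:ℝ)⁻¹ • emb d x‖^(d+2))⁻¹ + (1 + ‖(n:ℝ)⁻¹ • emb d y‖^(d+2))⁻¹))
              * (cg * ‖emb d (y - x)‖ ^ (-((d:ℝ)+γ)))
              = (K * cg * (n:ℝ)^(-θ)) * ((‖emb d (y - x)‖^θ * ‖emb d (y - x)‖ ^ (-((d:ℝ)+γ)))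
              * ((1 + ‖(n:ℝ)⁻¹ • emb d x‖^(d+2))⁻¹ + (1 + ‖(n:ℝ)⁻¹ • emb d y‖^(d+2))⁻¹))
              from by ring, e2]
  -- ENNReal majorants
  set F1 : (Fin d → ℤ) → (Fin d → ℤ) → ℝ≥0∞ := fun x y =>
    (if x ℓ < 0 ∧ 0 ≤ y ℓ then ENNReal.ofReal (‖emb d (y - x)‖^(-β)) else 0)
      * ENNReal.ofReal ((1 + ‖(n:ℝ)⁻¹ • emb d x‖^(d+2))⁻¹) with hF1
  set F2 : (Fin d → ℤ) → (Fin d → ℤ) → ℝ≥0∞ := fun x y =>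
    (if x ℓ < 0 ∧ 0 ≤ y ℓ then ENNReal.ofReal (‖emb d (y - x)‖^(-β)) else 0)
      * ENNReal.ofReal ((1 + ‖(n:ℝ)⁻¹ • emb d y‖^(d+2))⁻¹) with hF2
  set c1 : ℝ := K * cg * (n:ℝ)^(-θ) with hc1
  have hc10 : 0 ≤ c1 := by
    rw [hc1]
    have h := Real.rpow_nonneg hn0.le (-θ)
    exact mul_nonneg (mul_nonneg hK0.le hcg.le) h
  have hptE : ∀ x y : Fin d → ℤ,
      ENNReal.ofReal (if x ℓ < 0 ∧ 0 ≤ y ℓ then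
        |G s ((n : ℝ)⁻¹ • emb d y) - G s ((n : ℝ)⁻¹ • emb d x)| * pgam d cg γ (y - x)
        else 0)
      ≤ ENNReal.ofReal c1 * (F1 x y + F2 x y) := by
    intro x y
    split_ifs with hcnd
    · obtain ⟨hx, hy⟩ := hcnd
      refine le_trans (ENNReal.ofReal_le_ofReal (hptreal x y hx hy)) ?_
      rw [ENNReal.ofReal_mul hc10]
      apply mul_le_mul_right
      rw [mul_add, ENNReal.ofReal_add (by positivity) (by positivity)]
      apply add_le_add
      · simp only [hF1, if_pos (⟨hx, hy⟩ : x ℓ < 0 ∧ 0 ≤ y ℓ)]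
        rw [← ENNReal.ofReal_mul (by positivity)]
      · simp only [hF2, if_pos (⟨hx, hy⟩ : x ℓ < 0 ∧ 0 ≤ y ℓ)]
        rw [← ENNReal.ofReal_mul (by positivity)]
    · simp
  -- the (1+|m|)^(-θ) correction
  have hC1nn : (0:ℝ) ≤ C1 * 2^θ := by positivity
  have hcorr : ∀ m : ℤ, m < 0 → C1 * (((-m : ℤ)):ℝ)^(-θ) ≤ (C1 * 2^θ) * (1 + |(m:ℝ)|)^(-θ) := by
    intro m hm
    have hm1 : (1:ℝ) ≤ -(m:ℝ) := by
      have : (1:ℤ) ≤ -m := by omega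
      exact_mod_cast this
    have habs : |(m:ℝ)| = -(m:ℝ) := abs_of_neg (by exact_mod_cast hm)
    have hle : (1 + |(m:ℝ)|) ≤ 2 * (-(m:ℝ)) := by rw [habs]; linarith
    have h1 : (2 * (-(m:ℝ)))^(-θ) ≤ (1 + |(m:ℝ)|)^(-θ) :=
      Real.rpow_le_rpow_of_nonpos (by positivity) hle (by linarith)
    have h2 : (2 * (-(m:ℝ)))^(-θ) = 2^(-θ) * (-(m:ℝ))^(-θ) :=
      Real.mul_rpow (by norm_num) (by linarith)
    have h3 : (-(m:ℝ))^(-θ) = 2^θ * (2 * (-(m:ℝ)))^(-θ) := by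
      rw [h2, ← mul_assoc, ← Real.rpow_add (by norm_num : (0:ℝ) < 2)]
      simp
    have hc : (((-m : ℤ)):ℝ) = -(m:ℝ) := by push_cast; ring
    rw [hc]
    calc C1 * (-(m:ℝ))^(-θ) = C1 * 2^θ * (2*(-(m:ℝ)))^(-θ) := by rw [h3]; ring
      _ ≤ C1 * 2^θ * (1 + |(m:ℝ)|)^(-θ) := mul_le_mul_of_nonneg_left h1 hC1nn
  -- inner bound in x
  have hinner1 : ∀ x : Fin d → ℤ,
      (∑' y : Fin d → ℤ, (if x ℓ < 0 ∧ 0 ≤ y ℓ then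
        ENNReal.ofReal (‖emb d (y - x)‖^(-β)) else 0))
      ≤ ENNReal.ofReal ((C1 * 2^θ) * (1 + |(x ℓ : ℝ)|)^(-θ)) := by
    intro x
    by_cases hx : x ℓ < 0
    · have hre := Equiv.tsum_eq (Equiv.addLeft x) (fun y => if x ℓ < 0 ∧ 0 ≤ y ℓ then
        ENNReal.ofReal (‖emb d (y - x)‖^(-β)) else 0)
      rw [← hre]
      have hco : ∀ z : Fin d → ℤ,
          (if x ℓ < 0 ∧ 0 ≤ ((Equiv.addLeft x) z) ℓ then
            ENNReal.ofReal (‖emb d (((Equiv.addLeft x) z) - x)‖^(-β)) else 0)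
          = (if -(x ℓ) ≤ z ℓ then ENNReal.ofReal (‖emb d z‖^(-β)) else 0) := by
        intro z
        have he : (Equiv.addLeft x) z = x + z := rfl
        rw [he, show x + z - x = z from by abel]
        refine if_congr ?_ rfl rfl
        have he2 : (x + z) ℓ = x ℓ + z ℓ := rfl
        rw [he2]
        constructor
        · rintro ⟨_, h2⟩; omega
        · intro h; exact ⟨hx, by omega⟩
      rw [tsum_congr hco]
      have ha1 : (1:ℤ) ≤ -(x ℓ) := by omega
      refine le_trans (hC1 _ ha1) ?_
      rw [hexp]
      exact ENNReal.ofReal_le_ofReal (hcorr (x ℓ) hx)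
    · have hco : ∀ y : Fin d → ℤ, (if x ℓ < 0 ∧ 0 ≤ y ℓ then
          ENNReal.ofReal (‖emb d (y - x)‖^(-β)) else 0) = 0 :=
        fun y => if_neg (fun hc2 => hx hc2.1)
      rw [tsum_congr hco]
      simp
  -- inner bound in y
  have hinner2 : ∀ y : Fin d → ℤ,
      (∑' x : Fin d → ℤ, (if x ℓ < 0 ∧ 0 ≤ y ℓ then
        ENNReal.ofReal (‖emb d (y - x)‖^(-β)) else 0))
      ≤ ENNReal.ofReal ((C1 * 2^θ) * (1 + |(y ℓ : ℝ)|)^(-θ)) := by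
    intro y
    by_cases hy : 0 ≤ y ℓ
    · have hre := Equiv.tsum_eq (Equiv.subLeft y) (fun x => if x ℓ < 0 ∧ 0 ≤ y ℓ then
        ENNReal.ofReal (‖emb d (y - x)‖^(-β)) else 0)
      rw [← hre]
      have hco : ∀ z : Fin d → ℤ,
          (if ((Equiv.subLeft y) z) ℓ < 0 ∧ 0 ≤ y ℓ then
            ENNReal.ofReal (‖emb d (y - ((Equiv.subLeft y) z))‖^(-β)) else 0)
          = (if y ℓ + 1 ≤ z ℓ then ENNReal.ofReal (‖emb d z‖^(-β)) else 0) := by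
        intro z
        have he : (Equiv.subLeft y) z = y - z := rfl
        rw [he, show y - (y - z) = z from by abel]
        refine if_congr ?_ rfl rfl
        have he2 : (y - z) ℓ = y ℓ - z ℓ := rfl
        rw [he2]
        constructor
        · rintro ⟨h1, _⟩; omega
        · intro h; exact ⟨by omega, hy⟩
      rw [tsum_congr hco]
      have ha1 : (1:ℤ) ≤ y ℓ + 1 := by omega
      refine le_trans (hC1 _ ha1) ?_
      rw [hexp]
      apply ENNReal.ofReal_le_ofReal
      have hcast : (((y ℓ + 1 : ℤ)):ℝ) = 1 + |(y ℓ : ℝ)| := by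
        have : |(y ℓ : ℝ)| = (y ℓ : ℝ) := abs_of_nonneg (by exact_mod_cast hy)
        rw [this]; push_cast; ring
      rw [hcast]
      have hXnn : (0:ℝ) ≤ (1 + |(y ℓ : ℝ)|)^(-θ) :=
        Real.rpow_nonneg (by positivity) _
      exact mul_le_mul_of_nonneg_right (le_mul_of_one_le_right hC10.le h2θ1) hXnn
    · have hco : ∀ x : Fin d → ℤ, (if x ℓ < 0 ∧ 0 ≤ y ℓ then
          ENNReal.ofReal (‖emb d (y - x)‖^(-β)) else 0) = 0 :=
        fun x => if_neg (fun hc2 => hy hc2.2)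
      rw [tsum_congr hco]
      simp
  -- summing F1
  have hsum1 : ∑' x : Fin d → ℤ, ∑' y : Fin d → ℤ, F1 x y
      ≤ ENNReal.ofReal ((C1 * 2^θ) * (C2 * (n:ℝ)^((d:ℝ)-θ))) := by
    have hstep : ∀ x : Fin d → ℤ, ∑' y : Fin d → ℤ, F1 x y
        ≤ ENNReal.ofReal (C1 * 2^θ)
          * ENNReal.ofReal ((1 + ‖(n:ℝ)⁻¹ • emb d x‖^(d+2))⁻¹ * (1 + |(x ℓ : ℝ)|)^(-θ)) := by
      intro x
      calc ∑' y : Fin d → ℤ, F1 x y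
          = (∑' y : Fin d → ℤ, (if x ℓ < 0 ∧ 0 ≤ y ℓ then
              ENNReal.ofReal (‖emb d (y - x)‖^(-β)) else 0))
            * ENNReal.ofReal ((1 + ‖(n:ℝ)⁻¹ • emb d x‖^(d+2))⁻¹) := by
            simp only [hF1]
            exact ENNReal.tsum_mul_right
        _ ≤ ENNReal.ofReal ((C1 * 2^θ) * (1 + |(x ℓ : ℝ)|)^(-θ))
            * ENNReal.ofReal ((1 + ‖(n:ℝ)⁻¹ • emb d x‖^(d+2))⁻¹) :=
            mul_le_mul_left (hinner1 x) _
        _ = ENNReal.ofReal (C1 * 2^θ)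
            * ENNReal.ofReal ((1 + ‖(n:ℝ)⁻¹ • emb d x‖^(d+2))⁻¹ * (1 + |(x ℓ : ℝ)|)^(-θ)) := by
            rw [← ENNReal.ofReal_mul hC1nn, ← ENNReal.ofReal_mul (by
              exact mul_nonneg hC1nn (Real.rpow_nonneg (by positivity) _))]
            congr 1
            ring
    calc ∑' x : Fin d → ℤ, ∑' y : Fin d → ℤ, F1 x y
        ≤ ∑' x : Fin d → ℤ, (ENNReal.ofReal (C1 * 2^θ)
          * ENNReal.ofReal ((1 + ‖(n:ℝ)⁻¹ • emb d x‖^(d+2))⁻¹ * (1 + |(x ℓ : ℝ)|)^(-θ))) :=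
          ENNReal.tsum_le_tsum hstep
      _ = ENNReal.ofReal (C1 * 2^θ) * ∑' x : Fin d → ℤ,
          ENNReal.ofReal ((1 + ‖(n:ℝ)⁻¹ • emb d x‖^(d+2))⁻¹ * (1 + |(x ℓ : ℝ)|)^(-θ)) :=
          ENNReal.tsum_mul_left
      _ ≤ ENNReal.ofReal (C1 * 2^θ) * ENNReal.ofReal (C2 * (n:ℝ)^((d:ℝ)-θ)) :=
          mul_le_mul_right (hC2 n hn) _
      _ = ENNReal.ofReal ((C1 * 2^θ) * (C2 * (n:ℝ)^((d:ℝ)-θ))) :=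
          (ENNReal.ofReal_mul hC1nn).symm
  -- summing F2
  have hsum2 : ∑' x : Fin d → ℤ, ∑' y : Fin d → ℤ, F2 x y
      ≤ ENNReal.ofReal ((C1 * 2^θ) * (C2 * (n:ℝ)^((d:ℝ)-θ))) := by
    rw [ENNReal.tsum_comm]
    have hstep : ∀ y : Fin d → ℤ, ∑' x : Fin d → ℤ, F2 x y
        ≤ ENNReal.ofReal (C1 * 2^θ)
          * ENNReal.ofReal ((1 + ‖(n:ℝ)⁻¹ • emb d y‖^(d+2))⁻¹ * (1 + |(y ℓ : ℝ)|)^(-θ)) := by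
      intro y
      calc ∑' x : Fin d → ℤ, F2 x y
          = (∑' x : Fin d → ℤ, (if x ℓ < 0 ∧ 0 ≤ y ℓ then
              ENNReal.ofReal (‖emb d (y - x)‖^(-β)) else 0))
            * ENNReal.ofReal ((1 + ‖(n:ℝ)⁻¹ • emb d y‖^(d+2))⁻¹) := by
            simp only [hF2]
            exact ENNReal.tsum_mul_right
        _ ≤ ENNReal.ofReal ((C1 * 2^θ) * (1 + |(y ℓ : ℝ)|)^(-θ))
            * ENNReal.ofReal ((1 + ‖(n:ℝ)⁻¹ • emb d y‖^(d+2))⁻¹) :=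
            mul_le_mul_left (hinner2 y) _
        _ = ENNReal.ofReal (C1 * 2^θ)
            * ENNReal.ofReal ((1 + ‖(n:ℝ)⁻¹ • emb d y‖^(d+2))⁻¹ * (1 + |(y ℓ : ℝ)|)^(-θ)) := by
            rw [← ENNReal.ofReal_mul hC1nn, ← ENNReal.ofReal_mul (by
              exact mul_nonneg hC1nn (Real.rpow_nonneg (by positivity) _))]
            congr 1
            ring
    calc ∑' y : Fin d → ℤ, ∑' x : Fin d → ℤ, F2 x y
        ≤ ∑' y : Fin d → ℤ, (ENNReal.ofReal (C1 * 2^θ)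
          * ENNReal.ofReal ((1 + ‖(n:ℝ)⁻¹ • emb d y‖^(d+2))⁻¹ * (1 + |(y ℓ : ℝ)|)^(-θ))) :=
          ENNReal.tsum_le_tsum hstep
      _ = ENNReal.ofReal (C1 * 2^θ) * ∑' y : Fin d → ℤ,
          ENNReal.ofReal ((1 + ‖(n:ℝ)⁻¹ • emb d y‖^(d+2))⁻¹ * (1 + |(y ℓ : ℝ)|)^(-θ)) :=
          ENNReal.tsum_mul_left
      _ ≤ ENNReal.ofReal (C1 * 2^θ) * ENNReal.ofReal (C2 * (n:ℝ)^((d:ℝ)-θ)) :=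
          mul_le_mul_right (hC2 n hn) _
      _ = ENNReal.ofReal ((C1 * 2^θ) * (C2 * (n:ℝ)^((d:ℝ)-θ))) :=
          (ENNReal.ofReal_mul hC1nn).symm
  -- master bound
  have hEnn : (0:ℝ) ≤ (C1 * 2^θ) * (C2 * (n:ℝ)^((d:ℝ)-θ)) := by
    have h1 : (0:ℝ) ≤ C2 * (n:ℝ)^((d:ℝ)-θ) :=
      mul_nonneg hC20.le (Real.rpow_nonneg hn0.le _)
    exact mul_nonneg hC1nn h1
  have hmaster : ∑' x : Fin d → ℤ, ∑' y : Fin d → ℤ,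
      ENNReal.ofReal (if x ℓ < 0 ∧ 0 ≤ y ℓ then
        |G s ((n : ℝ)⁻¹ • emb d y) - G s ((n : ℝ)⁻¹ • emb d x)| * pgam d cg γ (y - x)
        else 0)
      ≤ ENNReal.ofReal (CC * (n:ℝ)^((d:ℝ)-γ)) := by
    calc ∑' x : Fin d → ℤ, ∑' y : Fin d → ℤ,
        ENNReal.ofReal (if x ℓ < 0 ∧ 0 ≤ y ℓ then
          |G s ((n : ℝ)⁻¹ • emb d y) - G s ((n : ℝ)⁻¹ • emb d x)| * pgam d cg γ (y - x)
          else 0)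
        ≤ ∑' x : Fin d → ℤ, ∑' y : Fin d → ℤ, ENNReal.ofReal c1 * (F1 x y + F2 x y) :=
          ENNReal.tsum_le_tsum (fun x => ENNReal.tsum_le_tsum (fun y => hptE x y))
      _ = ENNReal.ofReal c1 * ∑' x : Fin d → ℤ, ∑' y : Fin d → ℤ, (F1 x y + F2 x y) := by
          rw [← ENNReal.tsum_mul_left]
          exact tsum_congr (fun x => ENNReal.tsum_mul_left)
      _ = ENNReal.ofReal c1 * ((∑' x : Fin d → ℤ, ∑' y : Fin d → ℤ, F1 x y)
          + ∑' x : Fin d → ℤ, ∑' y : Fin d → ℤ, F2 x y) := by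
          congr 1
          calc ∑' x : Fin d → ℤ, ∑' y : Fin d → ℤ, (F1 x y + F2 x y)
              = ∑' x : Fin d → ℤ, ((∑' y : Fin d → ℤ, F1 x y) + ∑' y : Fin d → ℤ, F2 x y) :=
                tsum_congr (fun x => ENNReal.tsum_add)
            _ = _ := ENNReal.tsum_add
      _ ≤ ENNReal.ofReal c1 * (ENNReal.ofReal ((C1 * 2^θ) * (C2 * (n:ℝ)^((d:ℝ)-θ)))
          + ENNReal.ofReal ((C1 * 2^θ) * (C2 * (n:ℝ)^((d:ℝ)-θ)))) :=
          mul_le_mul_right (add_le_add hsum1 hsum2) _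
      _ = ENNReal.ofReal c1 * ENNReal.ofReal (2 * ((C1 * 2^θ) * (C2 * (n:ℝ)^((d:ℝ)-θ)))) := by
          rw [← ENNReal.ofReal_add hEnn hEnn]
          congr 1
          ring
      _ = ENNReal.ofReal (c1 * (2 * ((C1 * 2^θ) * (C2 * (n:ℝ)^((d:ℝ)-θ))))) :=
          (ENNReal.ofReal_mul hc10).symm
      _ = ENNReal.ofReal (CC * (n:ℝ)^((d:ℝ)-γ)) := by
          congr 1
          rw [hc1, hCC]
          have e : (n:ℝ)^(-θ) * (n:ℝ)^((d:ℝ)-θ) = (n:ℝ)^((d:ℝ)-γ) := by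
            rw [← Real.rpow_add hn0]
            congr 1
            rw [hθdef]; ring
          calc K*cg*(n:ℝ)^(-θ) * (2*((C1*2^θ)*(C2*(n:ℝ)^((d:ℝ)-θ))))
              = (K*cg)*(2*(C1*2^θ*C2)) * ((n:ℝ)^(-θ) * (n:ℝ)^((d:ℝ)-θ)) := by ring
            _ = (K*cg)*(2*(C1*2^θ*C2)) * (n:ℝ)^((d:ℝ)-γ) := by rw [e]
  have hBnn : (0:ℝ) ≤ CC * (n:ℝ)^((d:ℝ)-γ) :=
    mul_nonneg hCC0.le (Real.rpow_nonneg hn0.le _)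
  have hreal : (∑' x : Fin d → ℤ, ∑' y : Fin d → ℤ,
      (if x ℓ < 0 ∧ 0 ≤ y ℓ then
        |G s ((n : ℝ)⁻¹ • emb d y) - G s ((n : ℝ)⁻¹ • emb d x)| * pgam d cg γ (y - x)
        else 0)) ≤ CC * (n:ℝ)^((d:ℝ)-γ) :=
    Stmt15.tsum2_ofReal_le hgnn hBnn hmaster
  have hfrac0 : (0:ℝ) ≤ (n:ℝ)^γ / (n:ℝ)^d := by positivity
  refine le_trans (mul_le_mul_of_nonneg_left hreal hfrac0) (le_of_eq ?_)
  rw [show ((n:ℝ))^d = (n:ℝ)^((d:ℝ)) from (Real.rpow_natCast _ d).symm]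
  have e : (n:ℝ)^γ * (n:ℝ)^((d:ℝ)-γ) = (n:ℝ)^((d:ℝ)) := by
    rw [← Real.rpow_add hn0]
    congr 1
    ring
  calc (n:ℝ)^γ / (n:ℝ)^((d:ℝ)) * (CC * (n:ℝ)^((d:ℝ)-γ))
      = CC * ((n:ℝ)^γ * (n:ℝ)^((d:ℝ)-γ)) / (n:ℝ)^((d:ℝ)) := by ring
    _ = CC * (n:ℝ)^((d:ℝ)) / (n:ℝ)^((d:ℝ)) := by rw [e]
    _ = CC := by
        rw [mul_div_assoc, div_self (ne_of_gt (Real.rpow_pos_of_pos hn0 _)), mul_one]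

end
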